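/- arXiv:2210.17139 — 3 statements merged into one kernel-verified Lean document; each statement's English description precedes it below -/
import Mathlib

section
/- Cut-elimination: the rule (cut), inferring R, R', Γ, Γ' ⊢ u : B from R, Γ ⊢ w : A and R', Γ', w : A ⊢ u : B, is admissible in L_Σ(𝒜): if both premises are derivable in L_Σ(𝒜), then so is the conclusion. -/
namespace IGL

/-- An alphabet Σ: a nonempty countable type of characters partitioned into a
forward part and a backward part by an involutive converse operation. -/
structure Alphabet where
  Char : Type
  nonempty : Nonempty Char
  countable : Countable Char
  fwd : Char → Prop
  conv : Char → Char
  conv_conv : ∀ x, conv (conv x) = x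
  fwd_iff : ∀ x, fwd x ↔ ¬ fwd (conv x)

/-- Formulae of the intuitionistic multi-modal language `L_Σ`. -/
inductive Formula (C : Type) : Type
  | atom : ℕ → Formula C
  | bot  : Formula C
  | or   : Formula C → Formula C → Formula C
  | and  : Formula C → Formula C → Formula C
  | imp  : Formula C → Formula C → Formula C
  | dia  : C → Formula C → Formula C
  | box  : C → Formula C → Formula C

namespace Formula
/-- Intuitionistic negation `¬A := A ⊃ ⊥`. -/
def neg {C : Type} (A : Formula C) : Formula C := A.imp Formula.bot
/-- `A ≡ B := (A ⊃ B) ∧ (B ⊃ A)`. -/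
def equiv {C : Type} (A B : Formula C) : Formula C := (A.imp B).and (B.imp A)
end Formula

/-- Bi-relational Σ-models. -/
structure BiModel (α : Alphabet) where
  W : Type
  nonempty : Nonempty W
  le : W → W → Prop
  le_refl : ∀ w, le w w
  le_trans : ∀ w u v, le w u → le u v → le w v
  R : α.Char → W → W → Prop
  F1 : ∀ x w v v', R x w v → le v v' → ∃ w', le w w' ∧ R x w' v'
  F2 : ∀ x w w' v, le w w' → R x w v → ∃ v', R x w' v' ∧ le v v'
  F3 : ∀ x w u, R x w u ↔ R (α.conv x) u w
  V : W → ℕ → Prop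
  mono : ∀ w u, le w u → ∀ p, V w p → V u p

/-- Satisfaction `M,w ⊩ A`. -/
def Sat {α : Alphabet} (M : BiModel α) : M.W → Formula α.Char → Prop
  | w, Formula.atom p => M.V w p
  | _, Formula.bot => False
  | w, Formula.or A B => Sat M w A ∨ Sat M w B
  | w, Formula.and A B => Sat M w A ∧ Sat M w B
  | w, Formula.imp A B => ∀ w', M.le w w' → Sat M w' A → Sat M w' B
  | w, Formula.dia x A => ∃ v, M.R x w v ∧ Sat M v A
  | w, Formula.box x A => ∀ w' v', M.le w w' → M.R x w' v' → Sat M v' A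

/-- Axioms: seriality axioms `D_x` or intuitionistic path axioms
`(⟨x₁⟩⋯⟨xₙ⟩A ⊃ ⟨x⟩A) ∧ ([x]A ⊃ [x₁]⋯[xₙ]A)`, encoded by the character `x`
and the string `[x₁,…,xₙ]`. -/
inductive Ax (C : Type) : Type
  | ser : C → Ax C
  | ipa : C → List C → Ax C

/-- Composition of the accessibility relations along a string. -/
def BiModel.Rs {α : Alphabet} (M : BiModel α) : List α.Char → M.W → M.W → Prop
  | [], w, u => w = u
  | x :: s, w, u => ∃ v, M.R x w v ∧ M.Rs s v u

/-- The frame condition corresponding to an axiom. -/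
def SatisfiesAx {α : Alphabet} (M : BiModel α) : Ax α.Char → Prop
  | Ax.ser x => ∀ w, ∃ u, M.R x w u
  | Ax.ipa x s => ∀ w u, M.Rs s w u → M.R x w u

/-- A bi-relational (Σ,𝒜)-model. -/
def AModel {α : Alphabet} (𝒜 : Set (Ax α.Char)) (M : BiModel α) : Prop :=
  ∀ a ∈ 𝒜, SatisfiesAx M a

/-- `⟨x₁⟩⋯⟨xₙ⟩A`. -/
def dias {C : Type} : List C → Formula C → Formula C
  | [], A => A
  | x :: s, A => Formula.dia x (dias s A)

/-- `[x₁]⋯[xₙ]A`. -/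
def boxes {C : Type} : List C → Formula C → Formula C
  | [], A => A
  | x :: s, A => Formula.box x (boxes s A)

/-- The Hilbert system `H IK_m(Σ,𝒜)`. -/
inductive Hprf (α : Alphabet) (𝒜 : Set (Ax α.Char)) : Formula α.Char → Prop
  | ipl1 (A B : Formula α.Char) : Hprf α 𝒜 (A.imp (B.imp A))
  | ipl2 (A B C : Formula α.Char) : Hprf α 𝒜 ((A.imp (B.imp C)).imp ((A.imp B).imp (A.imp C)))
  | ipl3 (A B : Formula α.Char) : Hprf α 𝒜 (A.imp (A.or B))
  | ipl4 (A B : Formula α.Char) : Hprf α 𝒜 (B.imp (A.or B))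
  | ipl5 (A B C : Formula α.Char) : Hprf α 𝒜 ((A.imp C).imp ((B.imp C).imp ((A.or B).imp C)))
  | ipl6 (A B : Formula α.Char) : Hprf α 𝒜 ((A.and B).imp A)
  | ipl7 (A B : Formula α.Char) : Hprf α 𝒜 ((A.and B).imp B)
  | ipl8 (A B : Formula α.Char) : Hprf α 𝒜 (A.imp (B.imp (A.and B)))
  | ipl9 (A : Formula α.Char) : Hprf α 𝒜 (Formula.bot.imp A)
  | axK (x : α.Char) (A B : Formula α.Char) : Hprf α 𝒜 ((Formula.box x (A.imp B)).imp ((Formula.box x A).imp (Formula.box x B)))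
  | axBoxAnd (x : α.Char) (A B : Formula α.Char) : Hprf α 𝒜 ((Formula.box x (A.and B)).equiv ((Formula.box x A).and (Formula.box x B)))
  | axDiaOr (x : α.Char) (A B : Formula α.Char) : Hprf α 𝒜 ((Formula.dia x (A.or B)).equiv ((Formula.dia x A).or (Formula.dia x B)))
  | axKdia (x : α.Char) (A B : Formula α.Char) : Hprf α 𝒜 ((Formula.box x (A.imp B)).imp ((Formula.dia x A).imp (Formula.dia x B)))
  | axBoxDia (x : α.Char) (A B : Formula α.Char) : Hprf α 𝒜 (((Formula.box x A).and (Formula.dia x B)).imp (Formula.dia x (A.and B)))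
  | axNotDiaBot (x : α.Char) : Hprf α 𝒜 (Formula.dia x Formula.bot).neg
  | axConv (x : α.Char) (A : Formula α.Char) : Hprf α 𝒜 ((A.imp (Formula.box x (Formula.dia (α.conv x) A))).and
      ((Formula.dia x (Formula.box (α.conv x) A)).imp A))
  | axFS (x : α.Char) (A B : Formula α.Char) : Hprf α 𝒜 (((Formula.dia x A).imp (Formula.box x B)).imp (Formula.box x (A.imp B)))
  | axDiaImp (x : α.Char) (A B : Formula α.Char) : Hprf α 𝒜 ((Formula.dia x (A.imp B)).imp ((Formula.box x A).imp (Formula.dia x B)))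
  | axSer (x : α.Char) (A : Formula α.Char) (h : Ax.ser x ∈ 𝒜) : Hprf α 𝒜 ((Formula.box x A).imp (Formula.dia x A))
  | axIpa (x : α.Char) (s : List α.Char) (A : Formula α.Char) (h : Ax.ipa x s ∈ 𝒜) :
      Hprf α 𝒜 (((dias s A).imp (Formula.dia x A)).and ((Formula.box x A).imp (boxes s A)))
  | mp (A B : Formula α.Char) : Hprf α 𝒜 (A.imp B) → Hprf α 𝒜 A → Hprf α 𝒜 B
  | nec (x : α.Char) (A : Formula α.Char) : Hprf α 𝒜 A → Hprf α 𝒜 (Formula.box x A)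

/-- `B₁ ∧ ⋯ ∧ Bₙ` (left-nested). -/
def conjList {C : Type} : Formula C → List (Formula C) → Formula C
  | A, [] => A
  | A, B :: L => conjList (A.and B) L

/-- `𝒮 ⊢_𝒜 A`: either `A ∈ IK_m(Σ,𝒜)` or `B₁∧⋯∧Bₙ ⊃ A ∈ IK_m(Σ,𝒜)` for some
`B₁,…,Bₙ ∈ 𝒮`. -/
def HderivFrom (α : Alphabet) (𝒜 : Set (Ax α.Char)) (S : Set (Formula α.Char))
    (A : Formula α.Char) : Prop :=
  Hprf α 𝒜 A ∨ ∃ B L, B ∈ S ∧ (∀ D ∈ L, D ∈ S) ∧ Hprf α 𝒜 ((conjList B L).imp A)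

/-! ### Labeled sequents -/

/-- A relational atom `w R_x u`. -/
abbrev Rel (C : Type) := ℕ × C × ℕ
/-- A labeled formula `w : A`. -/
abbrev LF (C : Type) := ℕ × Formula C

def relLabels {C : Type} (R : Multiset (Rel C)) : Set ℕ :=
  {l | ∃ a ∈ R, a.1 = l ∨ a.2.2 = l}

def lfLabels {C : Type} (Γ : Multiset (LF C)) : Set ℕ :=
  {l | ∃ b ∈ Γ, b.1 = l}

/-- `u` is fresh with respect to the sequent `R, Γ ⊢ v : ⋯`. -/
def freshIn {C : Type} (u : ℕ) (R : Multiset (Rel C)) (Γ : Multiset (LF C)) (v : ℕ) : Prop :=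
  u ∉ relLabels R ∧ u ∉ lfLabels Γ ∧ u ≠ v

/-- `Chain s w u m`: the multiset `m` is a chain of relational atoms `w R_s u`
along the string `s` (with `w = u` and `m = 0` when `s = ε`). -/
inductive Chain {C : Type} : List C → ℕ → ℕ → Multiset (Rel C) → Prop
  | nil (w : ℕ) : Chain [] w w 0
  | cons {x : C} {s : List C} {w v u : ℕ} {m : Multiset (Rel C)} :
      Chain s v u m → Chain (x :: s) w u ((w, x, v) ::ₘ m)

/-- The labeled calculus `L_Σ(𝒜)`, height-indexed: `LD α 𝒜 n R Γ w A` states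
that the labeled sequent `R, Γ ⊢ w : A` has a proof of height at most `n`. -/
inductive LD (α : Alphabet) (𝒜 : Set (Ax α.Char)) :
    ℕ → Multiset (Rel α.Char) → Multiset (LF α.Char) → ℕ → Formula α.Char → Prop
  | id (n : ℕ) (R : Multiset (Rel α.Char)) (Γ : Multiset (LF α.Char)) (w p : ℕ) : LD α 𝒜 n R ((w, Formula.atom p) ::ₘ Γ) w (Formula.atom p)
  | botL (n : ℕ) (R : Multiset (Rel α.Char)) (Γ : Multiset (LF α.Char)) (w u : ℕ) (A : Formula α.Char) : LD α 𝒜 n R ((w, Formula.bot) ::ₘ Γ) u A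
  | orL {n : ℕ} {R : Multiset (Rel α.Char)} {Γ : Multiset (LF α.Char)} {w u : ℕ} {A B C : Formula α.Char} :
      LD α 𝒜 n R ((w, A) ::ₘ Γ) u C → LD α 𝒜 n R ((w, B) ::ₘ Γ) u C →
      LD α 𝒜 (n + 1) R ((w, A.or B) ::ₘ Γ) u C
  | orR1 {n : ℕ} {R : Multiset (Rel α.Char)} {Γ : Multiset (LF α.Char)} {w : ℕ} {A B : Formula α.Char} : LD α 𝒜 n R Γ w A → LD α 𝒜 (n + 1) R Γ w (A.or B)
  | orR2 {n : ℕ} {R : Multiset (Rel α.Char)} {Γ : Multiset (LF α.Char)} {w : ℕ} {A B : Formula α.Char} : LD α 𝒜 n R Γ w B → LD α 𝒜 (n + 1) R Γ w (A.or B)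
  | andL {n : ℕ} {R : Multiset (Rel α.Char)} {Γ : Multiset (LF α.Char)} {w u : ℕ} {A B C : Formula α.Char} :
      LD α 𝒜 n R ((w, A) ::ₘ (w, B) ::ₘ Γ) u C →
      LD α 𝒜 (n + 1) R ((w, A.and B) ::ₘ Γ) u C
  | andR {n : ℕ} {R : Multiset (Rel α.Char)} {Γ : Multiset (LF α.Char)} {w : ℕ} {A B : Formula α.Char} :
      LD α 𝒜 n R Γ w A → LD α 𝒜 n R Γ w B → LD α 𝒜 (n + 1) R Γ w (A.and B)
  | impL {n : ℕ} {R : Multiset (Rel α.Char)} {Γ : Multiset (LF α.Char)} {w u : ℕ} {A B C : Formula α.Char} :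
      LD α 𝒜 n R ((w, A.imp B) ::ₘ Γ) w A → LD α 𝒜 n R ((w, B) ::ₘ Γ) u C →
      LD α 𝒜 (n + 1) R ((w, A.imp B) ::ₘ Γ) u C
  | impR {n : ℕ} {R : Multiset (Rel α.Char)} {Γ : Multiset (LF α.Char)} {w : ℕ} {A B : Formula α.Char} :
      LD α 𝒜 n R ((w, A) ::ₘ Γ) w B → LD α 𝒜 (n + 1) R Γ w (A.imp B)
  | diaL {n : ℕ} {R : Multiset (Rel α.Char)} {Γ : Multiset (LF α.Char)} {w u v : ℕ} {x : α.Char} {A B : Formula α.Char} (hf : freshIn u R ((w, Formula.dia x A) ::ₘ Γ) v) :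
      LD α 𝒜 n ((w, x, u) ::ₘ R) ((u, A) ::ₘ Γ) v B →
      LD α 𝒜 (n + 1) R ((w, Formula.dia x A) ::ₘ Γ) v B
  | diaR {n : ℕ} {R : Multiset (Rel α.Char)} {Γ : Multiset (LF α.Char)} {w u : ℕ} {x : α.Char} {A : Formula α.Char} :
      LD α 𝒜 n ((w, x, u) ::ₘ R) Γ u A →
      LD α 𝒜 (n + 1) ((w, x, u) ::ₘ R) Γ w (Formula.dia x A)
  | boxR {n : ℕ} {R : Multiset (Rel α.Char)} {Γ : Multiset (LF α.Char)} {w u : ℕ} {x : α.Char} {A : Formula α.Char} (hf : freshIn u R Γ w) :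
      LD α 𝒜 n ((w, x, u) ::ₘ R) Γ u A → LD α 𝒜 (n + 1) R Γ w (Formula.box x A)
  | boxL {n : ℕ} {R : Multiset (Rel α.Char)} {Γ : Multiset (LF α.Char)} {w u v : ℕ} {x : α.Char} {A C : Formula α.Char} :
      LD α 𝒜 n ((w, x, u) ::ₘ R) ((w, Formula.box x A) ::ₘ (u, A) ::ₘ Γ) v C →
      LD α 𝒜 (n + 1) ((w, x, u) ::ₘ R) ((w, Formula.box x A) ::ₘ Γ) v C
  | dx {n : ℕ} {R : Multiset (Rel α.Char)} {Γ : Multiset (LF α.Char)} {u v : ℕ} {x : α.Char} {A : Formula α.Char} (w : ℕ) (hax : Ax.ser x ∈ 𝒜) (hf : freshIn u R Γ v) :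
      LD α 𝒜 n ((w, x, u) ::ₘ R) Γ v A → LD α 𝒜 (n + 1) R Γ v A
  | isx {n : ℕ} {R : Multiset (Rel α.Char)} {Γ : Multiset (LF α.Char)} {w u v : ℕ} {s : List α.Char} {x : α.Char} {m : Multiset (Rel α.Char)} {A : Formula α.Char} (hax : Ax.ipa x s ∈ 𝒜) (hc : Chain s w u m) :
      LD α 𝒜 n ((w, x, u) ::ₘ (m + R)) Γ v A → LD α 𝒜 (n + 1) (m + R) Γ v A
  | cx {n : ℕ} {R : Multiset (Rel α.Char)} {Γ : Multiset (LF α.Char)} {w u v : ℕ} {x : α.Char} {A : Formula α.Char} :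
      LD α 𝒜 n ((w, x, u) ::ₘ (u, α.conv x, w) ::ₘ R) Γ v A →
      LD α 𝒜 (n + 1) ((w, x, u) ::ₘ R) Γ v A

/-- Derivability in `L_Σ(𝒜)`. -/
def LDeriv (α : Alphabet) (𝒜 : Set (Ax α.Char)) (R : Multiset (Rel α.Char))
    (Γ : Multiset (LF α.Char)) (w : ℕ) (A : Formula α.Char) : Prop :=
  ∃ n, LD α 𝒜 n R Γ w A

/-- (Σ,𝒜)-validity of a labeled sequent. -/
def SeqValid (α : Alphabet) (𝒜 : Set (Ax α.Char)) (R : Multiset (Rel α.Char))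
    (Γ : Multiset (LF α.Char)) (w : ℕ) (A : Formula α.Char) : Prop :=
  ∀ (M : BiModel α), AModel 𝒜 M → ∀ I : ℕ → M.W,
    (∀ a ∈ R, M.R a.2.1 (I a.1) (I a.2.2)) → (∀ b ∈ Γ, Sat M (I b.1) b.2) →
      Sat M (I w) A

/-! ### Grammars and propagation -/

/-- Converse of a string: `s̄ = x̄ₙ⋯x̄₁` for `s = x₁⋯xₙ`. -/
def convStr {C : Type} (cv : C → C) (s : List C) : List C := (s.map cv).reverse

/-- The 𝒜-grammar `g(𝒜)`. -/
def Gram (α : Alphabet) (𝒜 : Set (Ax α.Char)) : Set (α.Char × List α.Char) :=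
  {p | Ax.ipa p.1 p.2 ∈ 𝒜 ∨
        ∃ x s, Ax.ipa x s ∈ 𝒜 ∧ p.1 = α.conv x ∧ p.2 = convStr α.conv s}

/-- One-step derivation between strings in a grammar. -/
def Step {C : Type} (g : Set (C × List C)) (s t : List C) : Prop :=
  ∃ s₁ s₂ x r, (x, r) ∈ g ∧ s = s₁ ++ x :: s₂ ∧ t = s₁ ++ r ++ s₂

/-- The language of the character `x` relative to a grammar. -/
def Lang {C : Type} (g : Set (C × List C)) (x : C) : Set (List C) :=
  {t | Relation.ReflTransGen (Step g) [x] t}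

/-- An edge of the propagation graph `PG(R)`. -/
def PGEdge (α : Alphabet) (R : Multiset (Rel α.Char)) (a : ℕ) (x : α.Char) (b : ℕ) : Prop :=
  (a, x, b) ∈ R ∨ (b, α.conv x, a) ∈ R

/-- `PPath α R w u s`: there is a propagation path from `w` to `u` in `PG(R)`
whose string is `s`. -/
inductive PPath (α : Alphabet) (R : Multiset (Rel α.Char)) : ℕ → ℕ → List α.Char → Prop
  | nil (w : ℕ) : PPath α R w w []
  | cons {w v u : ℕ} {x : α.Char} {s : List α.Char} :
      PGEdge α R w x v → PPath α R v u s → PPath α R w u (x :: s)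

/-- Side condition of the propagation rules: there exists a propagation path
`π(w,u)` in `PG(R)` with `s_π(w,u) ∈ L_{g(𝒜)}(x)`. -/
def CanProp (α : Alphabet) (𝒜 : Set (Ax α.Char)) (R : Multiset (Rel α.Char))
    (w u : ℕ) (x : α.Char) : Prop :=
  ∃ s, PPath α R w u s ∧ s ∈ Lang (Gram α 𝒜) x

/-- The refined labeled calculus `L*_Σ(𝒜)`, height-indexed. -/
inductive LDs (α : Alphabet) (𝒜 : Set (Ax α.Char)) :
    ℕ → Multiset (Rel α.Char) → Multiset (LF α.Char) → ℕ → Formula α.Char → Prop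
  | id (n : ℕ) (R : Multiset (Rel α.Char)) (Γ : Multiset (LF α.Char)) (w p : ℕ) : LDs α 𝒜 n R ((w, Formula.atom p) ::ₘ Γ) w (Formula.atom p)
  | botL (n : ℕ) (R : Multiset (Rel α.Char)) (Γ : Multiset (LF α.Char)) (w u : ℕ) (A : Formula α.Char) : LDs α 𝒜 n R ((w, Formula.bot) ::ₘ Γ) u A
  | orL {n : ℕ} {R : Multiset (Rel α.Char)} {Γ : Multiset (LF α.Char)} {w u : ℕ} {A B C : Formula α.Char} :
      LDs α 𝒜 n R ((w, A) ::ₘ Γ) u C → LDs α 𝒜 n R ((w, B) ::ₘ Γ) u C →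
      LDs α 𝒜 (n + 1) R ((w, A.or B) ::ₘ Γ) u C
  | orR1 {n : ℕ} {R : Multiset (Rel α.Char)} {Γ : Multiset (LF α.Char)} {w : ℕ} {A B : Formula α.Char} : LDs α 𝒜 n R Γ w A → LDs α 𝒜 (n + 1) R Γ w (A.or B)
  | orR2 {n : ℕ} {R : Multiset (Rel α.Char)} {Γ : Multiset (LF α.Char)} {w : ℕ} {A B : Formula α.Char} : LDs α 𝒜 n R Γ w B → LDs α 𝒜 (n + 1) R Γ w (A.or B)
  | andL {n : ℕ} {R : Multiset (Rel α.Char)} {Γ : Multiset (LF α.Char)} {w u : ℕ} {A B C : Formula α.Char} :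
      LDs α 𝒜 n R ((w, A) ::ₘ (w, B) ::ₘ Γ) u C →
      LDs α 𝒜 (n + 1) R ((w, A.and B) ::ₘ Γ) u C
  | andR {n : ℕ} {R : Multiset (Rel α.Char)} {Γ : Multiset (LF α.Char)} {w : ℕ} {A B : Formula α.Char} :
      LDs α 𝒜 n R Γ w A → LDs α 𝒜 n R Γ w B → LDs α 𝒜 (n + 1) R Γ w (A.and B)
  | impL {n : ℕ} {R : Multiset (Rel α.Char)} {Γ : Multiset (LF α.Char)} {w u : ℕ} {A B C : Formula α.Char} :
      LDs α 𝒜 n R ((w, A.imp B) ::ₘ Γ) w A → LDs α 𝒜 n R ((w, B) ::ₘ Γ) u C →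
      LDs α 𝒜 (n + 1) R ((w, A.imp B) ::ₘ Γ) u C
  | impR {n : ℕ} {R : Multiset (Rel α.Char)} {Γ : Multiset (LF α.Char)} {w : ℕ} {A B : Formula α.Char} :
      LDs α 𝒜 n R ((w, A) ::ₘ Γ) w B → LDs α 𝒜 (n + 1) R Γ w (A.imp B)
  | diaL {n : ℕ} {R : Multiset (Rel α.Char)} {Γ : Multiset (LF α.Char)} {w u v : ℕ} {x : α.Char} {A B : Formula α.Char} (hf : freshIn u R ((w, Formula.dia x A) ::ₘ Γ) v) :
      LDs α 𝒜 n ((w, x, u) ::ₘ R) ((u, A) ::ₘ Γ) v B →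
      LDs α 𝒜 (n + 1) R ((w, Formula.dia x A) ::ₘ Γ) v B
  | boxR {n : ℕ} {R : Multiset (Rel α.Char)} {Γ : Multiset (LF α.Char)} {w u : ℕ} {x : α.Char} {A : Formula α.Char} (hf : freshIn u R Γ w) :
      LDs α 𝒜 n ((w, x, u) ::ₘ R) Γ u A → LDs α 𝒜 (n + 1) R Γ w (Formula.box x A)
  | dx {n : ℕ} {R : Multiset (Rel α.Char)} {Γ : Multiset (LF α.Char)} {u v : ℕ} {x : α.Char} {A : Formula α.Char} (w : ℕ) (hax : Ax.ser x ∈ 𝒜) (hf : freshIn u R Γ v) :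
      LDs α 𝒜 n ((w, x, u) ::ₘ R) Γ v A → LDs α 𝒜 (n + 1) R Γ v A
  | pdia {n : ℕ} {R : Multiset (Rel α.Char)} {Γ : Multiset (LF α.Char)} {u : ℕ} {x : α.Char} {A : Formula α.Char} (w : ℕ) (h : CanProp α 𝒜 R w u x) :
      LDs α 𝒜 n R Γ u A → LDs α 𝒜 (n + 1) R Γ w (Formula.dia x A)
  | pbox {n : ℕ} {R : Multiset (Rel α.Char)} {Γ : Multiset (LF α.Char)} {w u v : ℕ} {x : α.Char} {A B : Formula α.Char} (h : CanProp α 𝒜 R w u x) :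
      LDs α 𝒜 n R ((w, Formula.box x A) ::ₘ (u, A) ::ₘ Γ) v B →
      LDs α 𝒜 (n + 1) R ((w, Formula.box x A) ::ₘ Γ) v B

/-- Derivability in `L*_Σ(𝒜)`. -/
def LDerivS (α : Alphabet) (𝒜 : Set (Ax α.Char)) (R : Multiset (Rel α.Char))
    (Γ : Multiset (LF α.Char)) (w : ℕ) (A : Formula α.Char) : Prop :=
  ∃ n, LDs α 𝒜 n R Γ w A

/-! ### Label substitutions -/

/-- `subL v u l`: replace the label `v` by `u`. -/
def subL (v u l : ℕ) : ℕ := if l = v then u else l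

def subR {C : Type} (v u : ℕ) (R : Multiset (Rel C)) : Multiset (Rel C) :=
  R.map (fun a => (subL v u a.1, a.2.1, subL v u a.2.2))

def subG {C : Type} (v u : ℕ) (Γ : Multiset (LF C)) : Multiset (LF C) :=
  Γ.map (fun b => (subL v u b.1, b.2))

/-! ### Double-negation translations -/

/-- The double-negation translation on `L_Σ`. -/
def dnt {C : Type} : Formula C → Formula C
  | Formula.atom p => ((Formula.atom p).neg).neg
  | Formula.bot => ((Formula.bot : Formula C).neg).neg
  | Formula.or A B => (((dnt A).neg).and ((dnt B).neg)).neg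
  | Formula.and A B => (dnt A).and (dnt B)
  | Formula.imp A B => (dnt A).imp (dnt B)
  | Formula.dia x A => (Formula.box x ((dnt A).neg)).neg
  | Formula.box x A => Formula.box x (dnt A)

/-! ### The classical language and calculi -/

/-- Formulae of the classical language `L^C_Σ` (negation normal form). -/
inductive CForm (C : Type) : Type
  | pos : ℕ → CForm C
  | neg : ℕ → CForm C
  | or  : CForm C → CForm C → CForm C
  | and : CForm C → CForm C → CForm C
  | dia : C → CForm C → CForm C
  | box : C → CForm C → CForm C

/-- Classical negation, recursively extended to all formulae of `L^C_Σ`. -/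
def cneg {C : Type} : CForm C → CForm C
  | CForm.pos p => CForm.neg p
  | CForm.neg p => CForm.pos p
  | CForm.or A B => CForm.and (cneg A) (cneg B)
  | CForm.and A B => CForm.or (cneg A) (cneg B)
  | CForm.dia x A => CForm.box x (cneg A)
  | CForm.box x A => CForm.dia x (cneg A)

/-- `⊥ := p ∧ ¬p` for a fixed propositional atom. -/
def cbot {C : Type} : CForm C := CForm.and (CForm.pos 0) (CForm.neg 0)

/-- `A ⊃ B := ¬A ∨ B`. -/
def cimp {C : Type} (A B : CForm C) : CForm C := CForm.or (cneg A) B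

/-- Reading a formula of `L_Σ` as a formula of `L^C_Σ`. -/
def toC {C : Type} : Formula C → CForm C
  | Formula.atom p => CForm.pos p
  | Formula.bot => cbot
  | Formula.or A B => CForm.or (toC A) (toC B)
  | Formula.and A B => CForm.and (toC A) (toC B)
  | Formula.imp A B => cimp (toC A) (toC B)
  | Formula.dia x A => CForm.dia x (toC A)
  | Formula.box x A => CForm.box x (toC A)

/-- A classical labeled formula. -/
abbrev CLF (C : Type) := ℕ × CForm C

def clfLabels {C : Type} (Γ : Multiset (CLF C)) : Set ℕ :=
  {l | ∃ b ∈ Γ, b.1 = l}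

/-- The refined labeled calculus `L^C_Σ(𝒜)` for the corresponding classical
grammar logic, operating on one-sided sequents `R ⊢ Γ`. -/
inductive CLD (α : Alphabet) (𝒜 : Set (Ax α.Char)) :
    Multiset (Rel α.Char) → Multiset (CLF α.Char) → Prop
  | id (R : Multiset (Rel α.Char)) (Γ : Multiset (CLF α.Char)) (w p : ℕ) :
      CLD α 𝒜 R ((w, CForm.pos p) ::ₘ (w, CForm.neg p) ::ₘ Γ)
  | orR {R : Multiset (Rel α.Char)} {Γ : Multiset (CLF α.Char)} {w : ℕ}
      {A B : CForm α.Char} :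
      CLD α 𝒜 R ((w, A) ::ₘ (w, B) ::ₘ Γ) → CLD α 𝒜 R ((w, CForm.or A B) ::ₘ Γ)
  | andR {R : Multiset (Rel α.Char)} {Γ : Multiset (CLF α.Char)} {w : ℕ}
      {A B : CForm α.Char} :
      CLD α 𝒜 R ((w, A) ::ₘ Γ) → CLD α 𝒜 R ((w, B) ::ₘ Γ) →
      CLD α 𝒜 R ((w, CForm.and A B) ::ₘ Γ)
  | boxR {R : Multiset (Rel α.Char)} {Γ : Multiset (CLF α.Char)} {w u : ℕ}
      {x : α.Char} {A : CForm α.Char}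
      (hf : u ∉ relLabels R ∧ u ∉ clfLabels ((w, CForm.box x A) ::ₘ Γ)) :
      CLD α 𝒜 ((w, x, u) ::ₘ R) ((u, A) ::ₘ Γ) →
      CLD α 𝒜 R ((w, CForm.box x A) ::ₘ Γ)
  | dx {R : Multiset (Rel α.Char)} {Γ : Multiset (CLF α.Char)} {u : ℕ}
      {x : α.Char} (w : ℕ) (hax : Ax.ser x ∈ 𝒜)
      (hf : u ∉ relLabels R ∧ u ∉ clfLabels Γ) :
      CLD α 𝒜 ((w, x, u) ::ₘ R) Γ → CLD α 𝒜 R Γ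
  | diaR {R : Multiset (Rel α.Char)} {Γ : Multiset (CLF α.Char)} {w u : ℕ}
      {x : α.Char} {A : CForm α.Char} (h : CanProp α 𝒜 R w u x) :
      CLD α 𝒜 R ((w, CForm.dia x A) ::ₘ (u, A) ::ₘ Γ) →
      CLD α 𝒜 R ((w, CForm.dia x A) ::ₘ Γ)

/-- `⟨x₁⟩⋯⟨xₙ⟩A` in the classical language. -/
def cdias {C : Type} : List C → CForm C → CForm C
  | [], A => A
  | x :: s, A => CForm.dia x (cdias s A)

/-- The Hilbert system for the classical grammar logic `K_m(Σ,𝒜')` corresponding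
to `IK_m(Σ,𝒜)`: seriality axioms of `𝒜` are kept and each intuitionistic path
axiom contributes the path axiom `⟨x₁⟩⋯⟨xₙ⟩A ⊃ ⟨x⟩A`. -/
inductive Kprf (α : Alphabet) (𝒜 : Set (Ax α.Char)) : CForm α.Char → Prop
  | cpl1 (A B : CForm α.Char) : Kprf α 𝒜 (cimp A (cimp B A))
  | cpl2 (A B C : CForm α.Char) :
      Kprf α 𝒜 (cimp (cimp A (cimp B C)) (cimp (cimp A B) (cimp A C)))
  | cpl3 (A B : CForm α.Char) : Kprf α 𝒜 (cimp A (CForm.or A B))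
  | cpl4 (A B : CForm α.Char) : Kprf α 𝒜 (cimp B (CForm.or A B))
  | cpl5 (A B C : CForm α.Char) :
      Kprf α 𝒜 (cimp (cimp A C) (cimp (cimp B C) (cimp (CForm.or A B) C)))
  | cpl6 (A B : CForm α.Char) : Kprf α 𝒜 (cimp (CForm.and A B) A)
  | cpl7 (A B : CForm α.Char) : Kprf α 𝒜 (cimp (CForm.and A B) B)
  | cpl8 (A B : CForm α.Char) : Kprf α 𝒜 (cimp A (cimp B (CForm.and A B)))
  | cpl9 (A : CForm α.Char) : Kprf α 𝒜 (cimp cbot A)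
  | cpl10 (A : CForm α.Char) : Kprf α 𝒜 (CForm.or A (cneg A))
  | axK (x : α.Char) (A B : CForm α.Char) :
      Kprf α 𝒜 (cimp (CForm.box x (cimp A B)) (cimp (CForm.box x A) (CForm.box x B)))
  | axConv (x : α.Char) (A : CForm α.Char) :
      Kprf α 𝒜 (cimp A (CForm.box x (CForm.dia (α.conv x) A)))
  | axSer (x : α.Char) (A : CForm α.Char) (h : Ax.ser x ∈ 𝒜) :
      Kprf α 𝒜 (cimp (CForm.box x A) (CForm.dia x A))
  | axPath (x : α.Char) (s : List α.Char) (A : CForm α.Char) (h : Ax.ipa x s ∈ 𝒜) :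
      Kprf α 𝒜 (cimp (cdias s A) (CForm.dia x A))
  | mp (A B : CForm α.Char) : Kprf α 𝒜 (cimp A B) → Kprf α 𝒜 A → Kprf α 𝒜 B
  | nec (x : α.Char) (A : CForm α.Char) : Kprf α 𝒜 A → Kprf α 𝒜 (CForm.box x A)

/-- The double-negation translation from `L^C_Σ` into `L_Σ`. -/
def dntC {C : Type} : CForm C → Formula C
  | CForm.pos p => ((Formula.atom p).neg).neg
  | CForm.neg p => (((Formula.atom p).neg).neg).neg
  | CForm.or A B => (((dntC A).neg).and ((dntC B).neg)).neg
  | CForm.and A B => (dntC A).and (dntC B)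
  | CForm.dia x A => (Formula.box x ((dntC A).neg)).neg
  | CForm.box x A => Formula.box x (dntC A)

/-! ### Labeled tree sequents and derivation trees -/

/-- Reachability along the relational atoms of `R`. -/
def Reach {C : Type} (R : Multiset (Rel C)) (a b : ℕ) : Prop :=
  Relation.ReflTransGen (fun p q => ∃ x, (p, x, q) ∈ R) a b

/-- `R, Γ ⊢ w : ⋯` is a labeled tree sequent with root `r`. -/
def isTreeSeqRoot (α : Alphabet) (R : Multiset (Rel α.Char))
    (Γ : Multiset (LF α.Char)) (w r : ℕ) : Prop :=
  (R = 0 → r = w ∧ ∀ b ∈ Γ, b.1 = w) ∧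
  (R ≠ 0 →
    (∀ a ∈ R, a.2.2 ≠ r) ∧
    (∀ l : ℕ, l ≠ r → (R.filter (fun a => a.2.2 = l)).card ≤ 1) ∧
    (∀ l ∈ relLabels R, Reach R r l) ∧
    (∀ b ∈ Γ, b.1 ∈ relLabels R) ∧ w ∈ relLabels R)

/-- Proof trees (derivations) in the refined labeled calculus `L*_Σ(𝒜)`. -/
inductive DTree (α : Alphabet) (𝒜 : Set (Ax α.Char)) :
    Multiset (Rel α.Char) → Multiset (LF α.Char) → ℕ → Formula α.Char → Type
  | id (R : Multiset (Rel α.Char)) (Γ : Multiset (LF α.Char)) (w p : ℕ) :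
      DTree α 𝒜 R ((w, Formula.atom p) ::ₘ Γ) w (Formula.atom p)
  | botL (R : Multiset (Rel α.Char)) (Γ : Multiset (LF α.Char)) (w u : ℕ)
      (A : Formula α.Char) : DTree α 𝒜 R ((w, Formula.bot) ::ₘ Γ) u A
  | orL (R : Multiset (Rel α.Char)) (Γ : Multiset (LF α.Char)) (w u : ℕ)
      (A B C : Formula α.Char) :
      DTree α 𝒜 R ((w, A) ::ₘ Γ) u C → DTree α 𝒜 R ((w, B) ::ₘ Γ) u C →
      DTree α 𝒜 R ((w, A.or B) ::ₘ Γ) u C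
  | orR1 (R : Multiset (Rel α.Char)) (Γ : Multiset (LF α.Char)) (w : ℕ)
      (A B : Formula α.Char) : DTree α 𝒜 R Γ w A → DTree α 𝒜 R Γ w (A.or B)
  | orR2 (R : Multiset (Rel α.Char)) (Γ : Multiset (LF α.Char)) (w : ℕ)
      (A B : Formula α.Char) : DTree α 𝒜 R Γ w B → DTree α 𝒜 R Γ w (A.or B)
  | andL (R : Multiset (Rel α.Char)) (Γ : Multiset (LF α.Char)) (w u : ℕ)
      (A B C : Formula α.Char) :
      DTree α 𝒜 R ((w, A) ::ₘ (w, B) ::ₘ Γ) u C →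
      DTree α 𝒜 R ((w, A.and B) ::ₘ Γ) u C
  | andR (R : Multiset (Rel α.Char)) (Γ : Multiset (LF α.Char)) (w : ℕ)
      (A B : Formula α.Char) :
      DTree α 𝒜 R Γ w A → DTree α 𝒜 R Γ w B → DTree α 𝒜 R Γ w (A.and B)
  | impL (R : Multiset (Rel α.Char)) (Γ : Multiset (LF α.Char)) (w u : ℕ)
      (A B C : Formula α.Char) :
      DTree α 𝒜 R ((w, A.imp B) ::ₘ Γ) w A → DTree α 𝒜 R ((w, B) ::ₘ Γ) u C →
      DTree α 𝒜 R ((w, A.imp B) ::ₘ Γ) u C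
  | impR (R : Multiset (Rel α.Char)) (Γ : Multiset (LF α.Char)) (w : ℕ)
      (A B : Formula α.Char) :
      DTree α 𝒜 R ((w, A) ::ₘ Γ) w B → DTree α 𝒜 R Γ w (A.imp B)
  | diaL (R : Multiset (Rel α.Char)) (Γ : Multiset (LF α.Char)) (w u v : ℕ)
      (x : α.Char) (A B : Formula α.Char)
      (hf : freshIn u R ((w, Formula.dia x A) ::ₘ Γ) v) :
      DTree α 𝒜 ((w, x, u) ::ₘ R) ((u, A) ::ₘ Γ) v B →
      DTree α 𝒜 R ((w, Formula.dia x A) ::ₘ Γ) v B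
  | boxR (R : Multiset (Rel α.Char)) (Γ : Multiset (LF α.Char)) (w u : ℕ)
      (x : α.Char) (A : Formula α.Char) (hf : freshIn u R Γ w) :
      DTree α 𝒜 ((w, x, u) ::ₘ R) Γ u A → DTree α 𝒜 R Γ w (Formula.box x A)
  | dx (R : Multiset (Rel α.Char)) (Γ : Multiset (LF α.Char)) (w u v : ℕ)
      (x : α.Char) (A : Formula α.Char) (hax : Ax.ser x ∈ 𝒜)
      (hf : freshIn u R Γ v) :
      DTree α 𝒜 ((w, x, u) ::ₘ R) Γ v A → DTree α 𝒜 R Γ v A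
  | pdia (R : Multiset (Rel α.Char)) (Γ : Multiset (LF α.Char)) (w u : ℕ)
      (x : α.Char) (A : Formula α.Char) (h : CanProp α 𝒜 R w u x) :
      DTree α 𝒜 R Γ u A → DTree α 𝒜 R Γ w (Formula.dia x A)
  | pbox (R : Multiset (Rel α.Char)) (Γ : Multiset (LF α.Char)) (w u v : ℕ)
      (x : α.Char) (A B : Formula α.Char) (h : CanProp α 𝒜 R w u x) :
      DTree α 𝒜 R ((w, Formula.box x A) ::ₘ (u, A) ::ₘ Γ) v B →
      DTree α 𝒜 R ((w, Formula.box x A) ::ₘ Γ) v B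

/-- `EverySeq P d`: every labeled sequent occurring in the derivation `d`
satisfies `P`. -/
def EverySeq {α : Alphabet} {𝒜 : Set (Ax α.Char)}
    (P : Multiset (Rel α.Char) → Multiset (LF α.Char) → ℕ → Formula α.Char → Prop) :
    ∀ {R : Multiset (Rel α.Char)} {Γ : Multiset (LF α.Char)} {w : ℕ}
      {A : Formula α.Char}, DTree α 𝒜 R Γ w A → Prop
  | _, _, _, _, DTree.id R Γ w p => P R ((w, Formula.atom p) ::ₘ Γ) w (Formula.atom p)
  | _, _, _, _, DTree.botL R Γ w u A => P R ((w, Formula.bot) ::ₘ Γ) u A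
  | _, _, _, _, DTree.orL R Γ w u A B C d1 d2 =>
      P R ((w, A.or B) ::ₘ Γ) u C ∧ EverySeq P d1 ∧ EverySeq P d2
  | _, _, _, _, DTree.orR1 R Γ w A B d => P R Γ w (A.or B) ∧ EverySeq P d
  | _, _, _, _, DTree.orR2 R Γ w A B d => P R Γ w (A.or B) ∧ EverySeq P d
  | _, _, _, _, DTree.andL R Γ w u A B C d =>
      P R ((w, A.and B) ::ₘ Γ) u C ∧ EverySeq P d
  | _, _, _, _, DTree.andR R Γ w A B d1 d2 =>
      P R Γ w (A.and B) ∧ EverySeq P d1 ∧ EverySeq P d2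
  | _, _, _, _, DTree.impL R Γ w u A B C d1 d2 =>
      P R ((w, A.imp B) ::ₘ Γ) u C ∧ EverySeq P d1 ∧ EverySeq P d2
  | _, _, _, _, DTree.impR R Γ w A B d => P R Γ w (A.imp B) ∧ EverySeq P d
  | _, _, _, _, DTree.diaL R Γ w u v x A B _ d =>
      P R ((w, Formula.dia x A) ::ₘ Γ) v B ∧ EverySeq P d
  | _, _, _, _, DTree.boxR R Γ w u x A _ d =>
      P R Γ w (Formula.box x A) ∧ EverySeq P d
  | _, _, _, _, DTree.dx R Γ w u v x A _ _ d => P R Γ v A ∧ EverySeq P d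
  | _, _, _, _, DTree.pdia R Γ w u x A _ d =>
      P R Γ w (Formula.dia x A) ∧ EverySeq P d
  | _, _, _, _, DTree.pbox R Γ w u v x A B _ d =>
      P R ((w, Formula.box x A) ::ₘ Γ) v B ∧ EverySeq P d

/-!
Cut is eliminated by Gentzen's argument: induction on the cut formula, with a subinduction on
the sum of the heights of the two premises. If the cut formula is not principal in the last rule
of one premise, the cut is permuted above that rule; the other premise is first moved to the new
context by height-preserving weakening, relabeling and inversion of the left rules. If it is
principal on both sides, the cut is replaced by cuts on its immediate subformulas. In the
`⟨x⟩` and `[x]` cases the two premises meet at a relational atom which then occurs twice, and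
the duplicate is removed with the converse rule `(c_x)`.
-/

section Labels

variable {C : Type}

@[simp] theorem mem_lfLabels_cons {l w : ℕ} {A : Formula C} {Γ : Multiset (LF C)} :
    l ∈ lfLabels ((w, A) ::ₘ Γ) ↔ l = w ∨ l ∈ lfLabels Γ := by
  simp [lfLabels, eq_comm]

theorem freshIn_cons_iff {u w v : ℕ} {A : Formula C} {R : Multiset (Rel C)}
    {Γ : Multiset (LF C)} : freshIn u R ((w, A) ::ₘ Γ) v ↔ u ≠ w ∧ freshIn u R Γ v := by
  simp only [freshIn, mem_lfLabels_cons, not_or]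
  tauto

theorem relLabels_finite (R : Multiset (Rel C)) : (relLabels R).Finite :=
  ((R.map Prod.fst + R.map (·.2.2)).toFinset.finite_toSet).subset <| by
    rintro l ⟨a, ha, rfl | rfl⟩ <;> simp [Multiset.mem_map_of_mem _ ha]

theorem lfLabels_finite (Γ : Multiset (LF C)) : (lfLabels Γ).Finite :=
  ((Γ.map Prod.fst).toFinset.finite_toSet).subset <| by
    rintro l ⟨b, hb, rfl⟩; simp [Multiset.mem_map_of_mem _ hb]

theorem exists_freshIn (R : Multiset (Rel C)) (Γ : Multiset (LF C)) (v : ℕ) :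
    ∃ t, freshIn t R Γ v := by
  obtain ⟨t, ht⟩ :=
    (((relLabels_finite R).union (lfLabels_finite Γ)).insert v).exists_notMem
  simp only [Set.mem_insert_iff, Set.mem_union, not_or] at ht
  exact ⟨t, ht.2.1, ht.2.2, ht.1⟩

def relabelRels (f : ℕ → ℕ) (R : Multiset (Rel C)) : Multiset (Rel C) :=
  R.map fun a => (f a.1, a.2.1, f a.2.2)

def relabelLFs (f : ℕ → ℕ) (Γ : Multiset (LF C)) : Multiset (LF C) :=
  Γ.map fun b => (f b.1, b.2)

@[simp] theorem relabelRels_cons (f : ℕ → ℕ) (w u : ℕ) (x : C) (R : Multiset (Rel C)) :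
    relabelRels f ((w, x, u) ::ₘ R) = (f w, x, f u) ::ₘ relabelRels f R :=
  Multiset.map_cons _ _ _

@[simp] theorem relabelRels_add (f : ℕ → ℕ) (R S : Multiset (Rel C)) :
    relabelRels f (R + S) = relabelRels f R + relabelRels f S :=
  Multiset.map_add _ _ _

@[simp] theorem relabelRels_id (R : Multiset (Rel C)) : relabelRels id R = R :=
  Multiset.map_id' R

@[simp] theorem relabelLFs_cons (f : ℕ → ℕ) (w : ℕ) (A : Formula C) (Γ : Multiset (LF C)) :
    relabelLFs f ((w, A) ::ₘ Γ) = (f w, A) ::ₘ relabelLFs f Γ :=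
  Multiset.map_cons _ _ _

@[simp] theorem relabelLFs_id (Γ : Multiset (LF C)) : relabelLFs id Γ = Γ :=
  Multiset.map_id' Γ

theorem relabelRels_update_of_notMem {f : ℕ → ℕ} {u t : ℕ} {R : Multiset (Rel C)}
    (hu : u ∉ relLabels R) : relabelRels (Function.update f u t) R = relabelRels f R :=
  Multiset.map_congr rfl fun a ha => by
    rw [Function.update_of_ne (fun h => hu ⟨a, ha, Or.inl h⟩),
      Function.update_of_ne (fun h => hu ⟨a, ha, Or.inr h⟩)]

theorem relabelLFs_update_of_notMem {f : ℕ → ℕ} {u t : ℕ} {Γ : Multiset (LF C)}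
    (hu : u ∉ lfLabels Γ) : relabelLFs (Function.update f u t) Γ = relabelLFs f Γ :=
  Multiset.map_congr rfl fun b hb => by
    rw [Function.update_of_ne (fun h => hu ⟨b, hb, h⟩)]

theorem Chain.relabel {s : List C} {w u : ℕ} {m : Multiset (Rel C)} (h : Chain s w u m)
    (f : ℕ → ℕ) : Chain s (f w) (f u) (relabelRels f m) := by
  induction h with
  | nil => exact .nil _
  | cons _ ih => rw [relabelRels_cons]; exact .cons ih

end Labels

section Structural

variable {α : Alphabet} {𝒜 : Set (Ax α.Char)} {n : ℕ} {R : Multiset (Rel α.Char)}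
  {Γ : Multiset (LF α.Char)} {w u v : ℕ} {x : α.Char} {A B C : Formula α.Char}

theorem LD.succ (h : LD α 𝒜 n R Γ v C) : LD α 𝒜 (n + 1) R Γ v C := by
  induction h with
  | id => exact .id ..
  | botL => exact .botL ..
  | orL _ _ ih₁ ih₂ => exact .orL ih₁ ih₂
  | orR1 _ ih => exact .orR1 ih
  | orR2 _ ih => exact .orR2 ih
  | andL _ ih => exact .andL ih
  | andR _ _ ih₁ ih₂ => exact .andR ih₁ ih₂
  | impL _ _ ih₁ ih₂ => exact .impL ih₁ ih₂
  | impR _ ih => exact .impR ih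
  | diaL hf _ ih => exact .diaL hf ih
  | diaR _ ih => exact .diaR ih
  | boxR hf _ ih => exact .boxR hf ih
  | boxL _ ih => exact .boxL ih
  | dx w hax hf _ ih => exact .dx w hax hf ih
  | isx hax hc _ ih => exact .isx hax hc ih
  | cx _ ih => exact .cx ih

theorem LD.mono {m : ℕ} (h : LD α 𝒜 n R Γ v C) (hnm : n ≤ m) : LD α 𝒜 m R Γ v C := by
  induction hnm with
  | refl => exact h
  | step _ ih => exact ih.succ

/-- Relabeling is proved together with weakening so that an eigenvariable can be renamed on the
fly: the relabeling is updated to send it to a label fresh for the weakened sequent. -/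
theorem LD.relabel_weaken (h : LD α 𝒜 n R Γ v C) (f : ℕ → ℕ) (R₀ : Multiset (Rel α.Char))
    (Γ₀ : Multiset (LF α.Char)) :
    LD α 𝒜 n (R₀ + relabelRels f R) (Γ₀ + relabelLFs f Γ) (f v) C := by
  induction h generalizing f R₀ Γ₀ with
  | id => simp only [relabelLFs_cons, Multiset.add_cons]; exact .id ..
  | botL => simp only [relabelLFs_cons, Multiset.add_cons]; exact .botL ..
  | orL _ _ ih₁ ih₂ =>
    simp only [relabelLFs_cons, Multiset.add_cons] at ih₁ ih₂ ⊢
    exact .orL (ih₁ f R₀ Γ₀) (ih₂ f R₀ Γ₀)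
  | orR1 _ ih => exact .orR1 (ih f R₀ Γ₀)
  | orR2 _ ih => exact .orR2 (ih f R₀ Γ₀)
  | andL _ ih =>
    simp only [relabelLFs_cons, Multiset.add_cons] at ih ⊢
    exact .andL (ih f R₀ Γ₀)
  | andR _ _ ih₁ ih₂ => exact .andR (ih₁ f R₀ Γ₀) (ih₂ f R₀ Γ₀)
  | impL _ _ ih₁ ih₂ =>
    simp only [relabelLFs_cons, Multiset.add_cons] at ih₁ ih₂ ⊢
    exact .impL (ih₁ f R₀ Γ₀) (ih₂ f R₀ Γ₀)
  | impR _ ih =>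
    simp only [relabelLFs_cons, Multiset.add_cons] at ih
    exact .impR (ih f R₀ Γ₀)
  | @diaL _ R Γ w u v x A _ hf _ ih =>
    obtain ⟨t, ht⟩ := exists_freshIn (R₀ + relabelRels f R)
      (Γ₀ + relabelLFs f ((w, .dia x A) ::ₘ Γ)) (f v)
    obtain ⟨huw, huR, huΓ, huv⟩ := freshIn_cons_iff.1 hf
    have := ih (Function.update f u t) R₀ Γ₀
    simp only [relabelRels_cons, relabelLFs_cons, relabelRels_update_of_notMem huR,
      relabelLFs_update_of_notMem huΓ, Function.update_self, Function.update_of_ne huw.symm,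
      Function.update_of_ne huv.symm, Multiset.add_cons] at this ht ⊢
    exact .diaL ht this
  | diaR _ ih =>
    simp only [relabelRels_cons, Multiset.add_cons] at ih ⊢
    exact .diaR (ih f R₀ Γ₀)
  | @boxR _ R Γ w u _ _ hf _ ih =>
    obtain ⟨t, ht⟩ := exists_freshIn (R₀ + relabelRels f R) (Γ₀ + relabelLFs f Γ) (f w)
    obtain ⟨huR, huΓ, huw⟩ := hf
    have := ih (Function.update f u t) R₀ Γ₀
    simp only [relabelRels_cons, relabelRels_update_of_notMem huR,
      relabelLFs_update_of_notMem huΓ, Function.update_self, Function.update_of_ne huw.symm,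
      Multiset.add_cons] at this
    exact .boxR ht this
  | boxL _ ih =>
    simp only [relabelRels_cons, relabelLFs_cons, Multiset.add_cons] at ih ⊢
    exact .boxL (ih f R₀ Γ₀)
  | @dx _ R Γ u v _ _ _ hax hf _ ih =>
    obtain ⟨t, ht⟩ := exists_freshIn (R₀ + relabelRels f R) (Γ₀ + relabelLFs f Γ) (f v)
    obtain ⟨huR, huΓ, huv⟩ := hf
    have := ih (Function.update f u t) R₀ Γ₀
    simp only [relabelRels_cons, relabelRels_update_of_notMem huR,
      relabelLFs_update_of_notMem huΓ, Function.update_self, Function.update_of_ne huv.symm,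
      Multiset.add_cons] at this
    exact .dx _ hax ht this
  | isx hax hc _ ih =>
    have := ih f R₀ Γ₀
    simp only [relabelRels_cons, relabelRels_add, Multiset.add_cons] at this ⊢
    rw [add_left_comm] at this ⊢
    exact .isx hax (hc.relabel f) this
  | cx _ ih =>
    simp only [relabelRels_cons, Multiset.add_cons] at ih ⊢
    exact .cx (ih f R₀ Γ₀)

theorem LD.weaken (h : LD α 𝒜 n R Γ v C) (R₀ : Multiset (Rel α.Char))
    (Γ₀ : Multiset (LF α.Char)) : LD α 𝒜 n (R₀ + R) (Γ₀ + Γ) v C := by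
  simpa using h.relabel_weaken _root_.id R₀ Γ₀

theorem LD.relabel (h : LD α 𝒜 n R Γ v C) (f : ℕ → ℕ) :
    LD α 𝒜 n (relabelRels f R) (relabelLFs f Γ) (f v) C := by
  simpa using h.relabel_weaken f 0 0

theorem LD.weakenRel (h : LD α 𝒜 n R Γ v C) (a : Rel α.Char) : LD α 𝒜 n (a ::ₘ R) Γ v C := by
  simpa using h.weaken {a} 0

theorem LD.weakenLF (h : LD α 𝒜 n R Γ v C) (b : LF α.Char) : LD α 𝒜 n R (b ::ₘ Γ) v C := by
  simpa using h.weaken 0 {b}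

theorem LD.swap {a b : LF α.Char} (h : LD α 𝒜 n R (a ::ₘ b ::ₘ Γ) v C) :
    LD α 𝒜 n R (b ::ₘ a ::ₘ Γ) v C := by
  rwa [Multiset.cons_swap]

theorem LD.rename_diaL_eigen (hf : freshIn u R ((w, .dia x A) ::ₘ Γ) v)
    (h : LD α 𝒜 n ((w, x, u) ::ₘ R) ((u, A) ::ₘ Γ) v B) (t : ℕ) :
    LD α 𝒜 n ((w, x, t) ::ₘ R) ((t, A) ::ₘ Γ) v B := by
  obtain ⟨huw, huR, huΓ, huv⟩ := freshIn_cons_iff.1 hf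
  simpa [relabelRels_update_of_notMem huR, relabelLFs_update_of_notMem huΓ,
    Function.update_of_ne huw.symm, Function.update_of_ne huv.symm]
    using h.relabel (Function.update _root_.id u t)

theorem LD.rename_boxR_eigen (hf : freshIn u R Γ w) (h : LD α 𝒜 n ((w, x, u) ::ₘ R) Γ u A)
    (t : ℕ) : LD α 𝒜 n ((w, x, t) ::ₘ R) Γ t A := by
  obtain ⟨huR, huΓ, huw⟩ := hf
  simpa [relabelRels_update_of_notMem huR, relabelLFs_update_of_notMem huΓ,
    Function.update_of_ne huw.symm] using h.relabel (Function.update _root_.id u t)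

theorem LD.rename_dx_eigen (hf : freshIn u R Γ v) (h : LD α 𝒜 n ((w, x, u) ::ₘ R) Γ v A)
    (t : ℕ) : ∃ w', LD α 𝒜 n ((w', x, t) ::ₘ R) Γ v A := by
  obtain ⟨huR, huΓ, huv⟩ := hf
  exact ⟨_, by simpa [relabelRels_update_of_notMem huR, relabelLFs_update_of_notMem huΓ,
    Function.update_of_ne huv.symm] using h.relabel (Function.update _root_.id u t)⟩

/-- Weakening by the converse atom lets `(c_x)` regenerate the duplicate, so two applications
of `(c_x)` absorb it. -/
theorem LD.contractRel {p q : ℕ} {y : α.Char}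
    (h : LD α 𝒜 n ((p, y, q) ::ₘ (p, y, q) ::ₘ R) Γ v C) :
    LD α 𝒜 (n + 2) ((p, y, q) ::ₘ R) Γ v C := by
  have h₁ : LD α 𝒜 (n + 1) ((q, α.conv y, p) ::ₘ (p, y, q) ::ₘ R) Γ v C :=
    .cx (by rw [α.conv_conv]; exact h.weakenRel _)
  exact .cx (by rwa [Multiset.cons_swap] at h₁)

end Structural

section Inversion

variable {α : Alphabet} {𝒜 : Set (Ax α.Char)}

/-- `LeftInv w F S Δ`: a premise of the left rule for `w : F` is its conclusion with `w : F`
replaced by `Δ` and the atoms `S` added. For `⟨x⟩A` the eigenvariable `t` is arbitrary. -/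
inductive LeftInv : ℕ → Formula α.Char → Multiset (Rel α.Char) → Multiset (LF α.Char) → Prop
  | orL₁ (w : ℕ) (A B : Formula α.Char) : LeftInv w (A.or B) 0 {(w, A)}
  | orL₂ (w : ℕ) (A B : Formula α.Char) : LeftInv w (A.or B) 0 {(w, B)}
  | andL (w : ℕ) (A B : Formula α.Char) : LeftInv w (A.and B) 0 ((w, A) ::ₘ {(w, B)})
  | impL (w : ℕ) (A B : Formula α.Char) : LeftInv w (A.imp B) 0 {(w, B)}
  | diaL (w t : ℕ) (x : α.Char) (A : Formula α.Char) : LeftInv w (.dia x A) {(w, x, t)} {(t, A)}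

theorem LD.invLeft {w : ℕ} {F : Formula α.Char} {S : Multiset (Rel α.Char)}
    {Δ : Multiset (LF α.Char)} (hinv : LeftInv w F S Δ) {n : ℕ} {R : Multiset (Rel α.Char)}
    {Γ Γ₀ : Multiset (LF α.Char)} {v : ℕ} {C : Formula α.Char} (h : LD α 𝒜 n R Γ v C)
    (hΓ : Γ = (w, F) ::ₘ Γ₀) : LD α 𝒜 n (S + R) (Δ + Γ₀) v C := by
  induction n using Nat.strong_induction_on generalizing R Γ Γ₀ v C with
  | _ n IH =>
  cases h with
  | id =>
    rcases Multiset.cons_eq_cons.1 hΓ with ⟨he, rfl⟩ | ⟨-, Γ₁, rfl, rfl⟩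
    · cases he; cases hinv
    · rw [Multiset.add_cons]; exact .id ..
  | botL =>
    rcases Multiset.cons_eq_cons.1 hΓ with ⟨he, rfl⟩ | ⟨-, Γ₁, rfl, rfl⟩
    · cases he; cases hinv
    · rw [Multiset.add_cons]; exact .botL ..
  | orL h₁ h₂ =>
    rcases Multiset.cons_eq_cons.1 hΓ with ⟨he, rfl⟩ | ⟨-, Γ₁, rfl, rfl⟩
    · cases he
      cases hinv
      · simpa using h₁.succ
      · simpa using h₂.succ
    · have g₁ := IH _ (Nat.lt_succ_self _) h₁ (Multiset.cons_swap ..)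
      have g₂ := IH _ (Nat.lt_succ_self _) h₂ (Multiset.cons_swap ..)
      rw [Multiset.add_cons] at g₁ g₂ ⊢
      exact .orL g₁ g₂
  | orR1 h₁ => exact .orR1 (IH _ (Nat.lt_succ_self _) h₁ hΓ)
  | orR2 h₁ => exact .orR2 (IH _ (Nat.lt_succ_self _) h₁ hΓ)
  | @andL _ _ _ w' _ A B _ h₁ =>
    rcases Multiset.cons_eq_cons.1 hΓ with ⟨he, rfl⟩ | ⟨-, Γ₁, rfl, rfl⟩
    · cases he
      cases hinv
      simpa using h₁.succ
    · have g := IH _ (Nat.lt_succ_self _) h₁ (Γ₀ := (w', A) ::ₘ (w', B) ::ₘ Γ₁)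
        (by simp only [Multiset.cons_swap])
      rw [Multiset.add_cons, Multiset.add_cons] at g
      rw [Multiset.add_cons]
      exact .andL g
  | andR h₁ h₂ =>
    exact .andR (IH _ (Nat.lt_succ_self _) h₁ hΓ) (IH _ (Nat.lt_succ_self _) h₂ hΓ)
  | impL h₁ h₂ =>
    rcases Multiset.cons_eq_cons.1 hΓ with ⟨he, rfl⟩ | ⟨-, Γ₁, rfl, rfl⟩
    · cases he
      cases hinv
      simpa using h₂.succ
    · have g₁ := IH _ (Nat.lt_succ_self _) h₁ (Multiset.cons_swap ..)
      have g₂ := IH _ (Nat.lt_succ_self _) h₂ (Multiset.cons_swap ..)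
      rw [Multiset.add_cons] at g₁ g₂ ⊢
      exact .impL g₁ g₂
  | impR h₁ =>
    have g := IH _ (Nat.lt_succ_self _) h₁ (by rw [hΓ, Multiset.cons_swap])
    rw [Multiset.add_cons] at g
    exact .impR g
  | @diaL _ R _ w' _ v x A _ hf h₁ =>
    rcases Multiset.cons_eq_cons.1 hΓ with ⟨he, rfl⟩ | ⟨-, Γ₁, rfl, rfl⟩
    · cases he
      cases hinv with
      | diaL t => simpa using (h₁.rename_diaL_eigen hf t).succ
    · obtain ⟨t, ht⟩ := exists_freshIn (S + R) (Δ + (w', .dia x A) ::ₘ Γ₁) v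
      have g := IH _ (Nat.lt_succ_self _) (h₁.rename_diaL_eigen hf t) (Multiset.cons_swap ..)
      rw [Multiset.add_cons, Multiset.add_cons] at g
      rw [Multiset.add_cons] at ht ⊢
      exact .diaL ht g
  | diaR h₁ =>
    have g := IH _ (Nat.lt_succ_self _) h₁ hΓ
    rw [Multiset.add_cons] at g ⊢
    exact .diaR g
  | @boxR _ R _ _ _ _ _ hf h₁ =>
    obtain ⟨t, ht⟩ := exists_freshIn (S + R) (Δ + Γ₀) v
    have g := IH _ (Nat.lt_succ_self _) (h₁.rename_boxR_eigen hf t) hΓ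
    rw [Multiset.add_cons] at g
    exact .boxR ht g
  | @boxL _ _ _ w' u _ x A _ h₁ =>
    rcases Multiset.cons_eq_cons.1 hΓ with ⟨he, rfl⟩ | ⟨-, Γ₁, rfl, rfl⟩
    · cases he; cases hinv
    · have g := IH _ (Nat.lt_succ_self _) h₁ (Γ₀ := (w', .box x A) ::ₘ (u, A) ::ₘ Γ₁)
        (by simp only [Multiset.cons_swap])
      rw [Multiset.add_cons, Multiset.add_cons, Multiset.add_cons] at g
      rw [Multiset.add_cons, Multiset.add_cons]
      exact .boxL g
  | @dx _ R _ _ v _ _ _ hax hf h₁ =>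
    obtain ⟨t, ht⟩ := exists_freshIn (S + R) (Δ + Γ₀) v
    obtain ⟨w', h₁'⟩ := h₁.rename_dx_eigen hf t
    have g := IH _ (Nat.lt_succ_self _) h₁' hΓ
    rw [Multiset.add_cons] at g
    exact .dx w' hax ht g
  | isx hax hc h₁ =>
    have g := IH _ (Nat.lt_succ_self _) h₁ hΓ
    rw [Multiset.add_cons, add_left_comm] at g
    rw [add_left_comm]
    exact .isx hax hc g
  | cx h₁ =>
    have g := IH _ (Nat.lt_succ_self _) h₁ hΓ
    rw [Multiset.add_cons, Multiset.add_cons] at g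
    rw [Multiset.add_cons]
    exact .cx g

variable {n : ℕ} {R : Multiset (Rel α.Char)} {Γ : Multiset (LF α.Char)} {w v : ℕ} {x : α.Char}
  {A B C : Formula α.Char}

theorem LD.invOrL₁ (h : LD α 𝒜 n R ((w, A.or B) ::ₘ Γ) v C) : LD α 𝒜 n R ((w, A) ::ₘ Γ) v C := by
  simpa using h.invLeft (.orL₁ w A B) rfl

theorem LD.invOrL₂ (h : LD α 𝒜 n R ((w, A.or B) ::ₘ Γ) v C) : LD α 𝒜 n R ((w, B) ::ₘ Γ) v C := by
  simpa using h.invLeft (.orL₂ w A B) rfl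

theorem LD.invAndL (h : LD α 𝒜 n R ((w, A.and B) ::ₘ Γ) v C) :
    LD α 𝒜 n R ((w, A) ::ₘ (w, B) ::ₘ Γ) v C := by
  simpa using h.invLeft (.andL w A B) rfl

theorem LD.invImpL (h : LD α 𝒜 n R ((w, A.imp B) ::ₘ Γ) v C) :
    LD α 𝒜 n R ((w, B) ::ₘ Γ) v C := by
  simpa using h.invLeft (.impL w A B) rfl

theorem LD.invDiaL (h : LD α 𝒜 n R ((w, .dia x A) ::ₘ Γ) v C) (t : ℕ) :
    LD α 𝒜 n ((w, x, t) ::ₘ R) ((t, A) ::ₘ Γ) v C := by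
  simpa using h.invLeft (.diaL w t x A) rfl

end Inversion

namespace LDeriv

variable {α : Alphabet} {𝒜 : Set (Ax α.Char)} {R : Multiset (Rel α.Char)}
  {Γ : Multiset (LF α.Char)} {w u v : ℕ} {x : α.Char} {A B C : Formula α.Char}

theorem orL (h₁ : LDeriv α 𝒜 R ((w, A) ::ₘ Γ) u C) (h₂ : LDeriv α 𝒜 R ((w, B) ::ₘ Γ) u C) :
    LDeriv α 𝒜 R ((w, A.or B) ::ₘ Γ) u C :=
  let ⟨n₁, d₁⟩ := h₁; let ⟨n₂, d₂⟩ := h₂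
  ⟨max n₁ n₂ + 1, .orL (d₁.mono (le_max_left ..)) (d₂.mono (le_max_right ..))⟩

theorem orR1 (h : LDeriv α 𝒜 R Γ w A) : LDeriv α 𝒜 R Γ w (A.or B) :=
  let ⟨n, d⟩ := h; ⟨n + 1, .orR1 d⟩

theorem orR2 (h : LDeriv α 𝒜 R Γ w B) : LDeriv α 𝒜 R Γ w (A.or B) :=
  let ⟨n, d⟩ := h; ⟨n + 1, .orR2 d⟩

theorem andL (h : LDeriv α 𝒜 R ((w, A) ::ₘ (w, B) ::ₘ Γ) u C) :
    LDeriv α 𝒜 R ((w, A.and B) ::ₘ Γ) u C :=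
  let ⟨n, d⟩ := h; ⟨n + 1, .andL d⟩

theorem andR (h₁ : LDeriv α 𝒜 R Γ w A) (h₂ : LDeriv α 𝒜 R Γ w B) :
    LDeriv α 𝒜 R Γ w (A.and B) :=
  let ⟨n₁, d₁⟩ := h₁; let ⟨n₂, d₂⟩ := h₂
  ⟨max n₁ n₂ + 1, .andR (d₁.mono (le_max_left ..)) (d₂.mono (le_max_right ..))⟩

theorem impL (h₁ : LDeriv α 𝒜 R ((w, A.imp B) ::ₘ Γ) w A) (h₂ : LDeriv α 𝒜 R ((w, B) ::ₘ Γ) u C) :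
    LDeriv α 𝒜 R ((w, A.imp B) ::ₘ Γ) u C :=
  let ⟨n₁, d₁⟩ := h₁; let ⟨n₂, d₂⟩ := h₂
  ⟨max n₁ n₂ + 1, .impL (d₁.mono (le_max_left ..)) (d₂.mono (le_max_right ..))⟩

theorem impR (h : LDeriv α 𝒜 R ((w, A) ::ₘ Γ) w B) : LDeriv α 𝒜 R Γ w (A.imp B) :=
  let ⟨n, d⟩ := h; ⟨n + 1, .impR d⟩

theorem diaL (hf : freshIn u R ((w, .dia x A) ::ₘ Γ) v)
    (h : LDeriv α 𝒜 ((w, x, u) ::ₘ R) ((u, A) ::ₘ Γ) v B) :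
    LDeriv α 𝒜 R ((w, .dia x A) ::ₘ Γ) v B :=
  let ⟨n, d⟩ := h; ⟨n + 1, .diaL hf d⟩

theorem diaR (h : LDeriv α 𝒜 ((w, x, u) ::ₘ R) Γ u A) :
    LDeriv α 𝒜 ((w, x, u) ::ₘ R) Γ w (.dia x A) :=
  let ⟨n, d⟩ := h; ⟨n + 1, .diaR d⟩

theorem boxR (hf : freshIn u R Γ w) (h : LDeriv α 𝒜 ((w, x, u) ::ₘ R) Γ u A) :
    LDeriv α 𝒜 R Γ w (.box x A) :=
  let ⟨n, d⟩ := h; ⟨n + 1, .boxR hf d⟩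

theorem boxL (h : LDeriv α 𝒜 ((w, x, u) ::ₘ R) ((w, .box x A) ::ₘ (u, A) ::ₘ Γ) v C) :
    LDeriv α 𝒜 ((w, x, u) ::ₘ R) ((w, .box x A) ::ₘ Γ) v C :=
  let ⟨n, d⟩ := h; ⟨n + 1, .boxL d⟩

theorem dx (w : ℕ) (hax : Ax.ser x ∈ 𝒜) (hf : freshIn u R Γ v)
    (h : LDeriv α 𝒜 ((w, x, u) ::ₘ R) Γ v A) : LDeriv α 𝒜 R Γ v A :=
  let ⟨n, d⟩ := h; ⟨n + 1, .dx w hax hf d⟩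

theorem isx {s : List α.Char} {m : Multiset (Rel α.Char)} (hax : Ax.ipa x s ∈ 𝒜)
    (hc : Chain s w u m) (h : LDeriv α 𝒜 ((w, x, u) ::ₘ (m + R)) Γ v A) :
    LDeriv α 𝒜 (m + R) Γ v A :=
  let ⟨n, d⟩ := h; ⟨n + 1, .isx hax hc d⟩

theorem cx (h : LDeriv α 𝒜 ((w, x, u) ::ₘ (u, α.conv x, w) ::ₘ R) Γ v A) :
    LDeriv α 𝒜 ((w, x, u) ::ₘ R) Γ v A :=
  let ⟨n, d⟩ := h; ⟨n + 1, .cx d⟩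

theorem weaken (h : LDeriv α 𝒜 R Γ v A) (R₀ : Multiset (Rel α.Char))
    (Γ₀ : Multiset (LF α.Char)) : LDeriv α 𝒜 (R₀ + R) (Γ₀ + Γ) v A :=
  let ⟨n, d⟩ := h; ⟨n, d.weaken R₀ Γ₀⟩

theorem weakenLF (h : LDeriv α 𝒜 R Γ v A) (b : LF α.Char) : LDeriv α 𝒜 R (b ::ₘ Γ) v A :=
  let ⟨n, d⟩ := h; ⟨n, d.weakenLF b⟩

theorem contractRel {p q : ℕ} {y : α.Char}
    (h : LDeriv α 𝒜 ((p, y, q) ::ₘ (p, y, q) ::ₘ R) Γ v A) :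
    LDeriv α 𝒜 ((p, y, q) ::ₘ R) Γ v A :=
  let ⟨n, d⟩ := h; ⟨n + 2, d.contractRel⟩

end LDeriv

section Cut

def CutAdmissible (α : Alphabet) (𝒜 : Set (Ax α.Char)) (A : Formula α.Char) : Prop :=
  ∀ ⦃R Γ w u B⦄, LDeriv α 𝒜 R Γ w A → LDeriv α 𝒜 R ((w, A) ::ₘ Γ) u B → LDeriv α 𝒜 R Γ u B

def CutAdmissibleBelow (α : Alphabet) (𝒜 : Set (Ax α.Char)) (A : Formula α.Char) (N : ℕ) :
    Prop :=
  ∀ ⦃m₁ m₂ R Γ w u B⦄, LD α 𝒜 m₁ R Γ w A → LD α 𝒜 m₂ R ((w, A) ::ₘ Γ) u B → m₁ + m₂ < N →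
    LDeriv α 𝒜 R Γ u B

def PrincipalRight (α : Alphabet) (𝒜 : Set (Ax α.Char)) (R : Multiset (Rel α.Char))
    (Γ : Multiset (LF α.Char)) (w : ℕ) : Formula α.Char → Prop
  | .atom p => (w, .atom p) ∈ Γ
  | .bot => False
  | .or A₁ A₂ => LDeriv α 𝒜 R Γ w A₁ ∨ LDeriv α 𝒜 R Γ w A₂
  | .and A₁ A₂ => LDeriv α 𝒜 R Γ w A₁ ∧ LDeriv α 𝒜 R Γ w A₂
  | .imp A₁ A₂ => LDeriv α 𝒜 R ((w, A₁) ::ₘ Γ) w A₂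
  | .dia x A => ∃ t, (w, x, t) ∈ R ∧ LDeriv α 𝒜 R Γ t A
  | .box x A => ∀ t, LDeriv α 𝒜 ((w, x, t) ::ₘ R) Γ t A

/-- The premises of a last rule of `R, w : A, Γ ⊢ u : B` with principal formula `w : A`. The
left rules for `⊃` and `[x]` keep `w : A` in a premise; that premise is recorded with `w : A`
already cut away. -/
def PrincipalLeft (α : Alphabet) (𝒜 : Set (Ax α.Char)) (R : Multiset (Rel α.Char))
    (Γ : Multiset (LF α.Char)) (w u : ℕ) (B : Formula α.Char) : Formula α.Char → Prop
  | .atom p => u = w ∧ B = .atom p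
  | .bot => True
  | .or A₁ A₂ => LDeriv α 𝒜 R ((w, A₁) ::ₘ Γ) u B ∧ LDeriv α 𝒜 R ((w, A₂) ::ₘ Γ) u B
  | .and A₁ A₂ => LDeriv α 𝒜 R ((w, A₁) ::ₘ (w, A₂) ::ₘ Γ) u B
  | .imp A₁ A₂ => LDeriv α 𝒜 R Γ w A₁ ∧ LDeriv α 𝒜 R ((w, A₂) ::ₘ Γ) u B
  | .dia x A => ∀ t, LDeriv α 𝒜 ((w, x, t) ::ₘ R) ((t, A) ::ₘ Γ) u B
  | .box x A => ∃ t, (w, x, t) ∈ R ∧ LDeriv α 𝒜 R ((t, A) ::ₘ Γ) u B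

variable {α : Alphabet} {𝒜 : Set (Ax α.Char)} {n₁ n₂ : ℕ} {R : Multiset (Rel α.Char)}
  {Γ : Multiset (LF α.Char)} {w u : ℕ} {A B : Formula α.Char}

theorem cut_principal (hsub : ∀ C : Formula α.Char, sizeOf C < sizeOf A → CutAdmissible α 𝒜 C)
    (hR : PrincipalRight α 𝒜 R Γ w A) (hL : PrincipalLeft α 𝒜 R Γ w u B A) :
    LDeriv α 𝒜 R Γ u B := by
  cases A with
  | atom p =>
    obtain ⟨rfl, rfl⟩ := hL
    obtain ⟨Γ', rfl⟩ := Multiset.exists_cons_of_mem hR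
    exact ⟨0, .id ..⟩
  | bot => exact hR.elim
  | or C D =>
    rcases hR with h | h
    · exact hsub C (by simp +arith) h hL.1
    · exact hsub D (by simp +arith) h hL.2
  | and C D =>
    exact hsub C (by simp +arith) hR.1
      (hsub D (by simp +arith) (hR.2.weakenLF _) (by rw [Multiset.cons_swap]; exact hL))
  | imp C D => exact hsub D (by simp +arith) (hsub C (by simp +arith) hL.1 hR) hL.2
  | dia x C =>
    obtain ⟨t, ht, hC⟩ := hR
    obtain ⟨R', rfl⟩ := Multiset.exists_cons_of_mem ht
    exact hsub C (by simp +arith) hC (hL t).contractRel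
  | box x C =>
    obtain ⟨t, ht, hB⟩ := hL
    obtain ⟨R', rfl⟩ := Multiset.exists_cons_of_mem ht
    exact hsub C (by simp +arith) (hR t).contractRel hB

theorem cut_permute_left (ih : CutAdmissibleBelow α 𝒜 A (n₁ + n₂))
    (hR : PrincipalRight α 𝒜 R Γ w A → LDeriv α 𝒜 R Γ u B)
    (d₁ : LD α 𝒜 n₁ R Γ w A) (d₂ : LD α 𝒜 n₂ R ((w, A) ::ₘ Γ) u B) : LDeriv α 𝒜 R Γ u B := by
  cases d₁ with
  | id => exact hR (Multiset.mem_cons_self ..)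
  | botL => exact ⟨0, .botL ..⟩
  | orL h₁ h₂ =>
    exact (ih h₁ d₂.swap.invOrL₁.swap (by omega)).orL (ih h₂ d₂.swap.invOrL₂.swap (by omega))
  | orR1 h => exact hR (.inl ⟨_, h⟩)
  | orR2 h => exact hR (.inr ⟨_, h⟩)
  | andL h =>
    exact (ih h (by simpa only [Multiset.cons_swap] using d₂.swap.invAndL) (by omega)).andL
  | andR h₁ h₂ => exact hR ⟨⟨_, h₁⟩, ⟨_, h₂⟩⟩
  | impL h₁ h₂ => exact LDeriv.impL ⟨_, h₁⟩ (ih h₂ d₂.swap.invImpL.swap (by omega))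
  | impR h => exact hR ⟨_, h⟩
  | @diaL _ R Γ w' _ _ y C _ hf h =>
    obtain ⟨t, ht⟩ := exists_freshIn R ((w', .dia y C) ::ₘ Γ) u
    exact (ih (h.rename_diaL_eigen hf t) (d₂.swap.invDiaL t).swap (by omega)).diaL ht
  | diaR h => exact hR ⟨_, Multiset.mem_cons_self .., ⟨_, h⟩⟩
  | boxR hf h => exact hR fun t => ⟨_, h.rename_boxR_eigen hf t⟩
  | @boxL _ _ _ _ t _ _ C _ h =>
    exact (ih h (by simpa only [Multiset.cons_swap] using d₂.weakenLF (t, C)) (by omega)).boxL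
  | @dx _ R Γ _ _ _ _ _ hax hf h =>
    obtain ⟨t, ht⟩ := exists_freshIn R Γ u
    obtain ⟨w', h'⟩ := h.rename_dx_eigen hf t
    exact (ih h' (d₂.weakenRel _) (by omega)).dx w' hax ht
  | isx hax hc h => exact (ih h (d₂.weakenRel _) (by omega)).isx hax hc
  | @cx _ _ _ w' u' _ x _ h =>
    have d₂' := d₂.weakenRel (u', α.conv x, w')
    rw [Multiset.cons_swap] at d₂'
    exact (ih h d₂' (by omega)).cx

theorem cut_permute_right (ih : CutAdmissibleBelow α 𝒜 A (n₁ + n₂))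
    (hL : PrincipalLeft α 𝒜 R Γ w u B A → LDeriv α 𝒜 R Γ u B)
    (d₁ : LD α 𝒜 n₁ R Γ w A) (d₂ : LD α 𝒜 n₂ R ((w, A) ::ₘ Γ) u B) : LDeriv α 𝒜 R Γ u B := by
  generalize hΔ : (w, A) ::ₘ Γ = Δ at d₂
  cases d₂ with
  | id =>
    rcases Multiset.cons_eq_cons.1 hΔ with ⟨he, rfl⟩ | ⟨-, Γ₁, rfl, rfl⟩
    · cases he; exact hL ⟨rfl, rfl⟩
    · exact ⟨0, .id ..⟩
  | botL =>
    rcases Multiset.cons_eq_cons.1 hΔ with ⟨he, rfl⟩ | ⟨-, Γ₁, rfl, rfl⟩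
    · cases he; exact hL trivial
    · exact ⟨0, .botL ..⟩
  | orL h₁ h₂ =>
    rcases Multiset.cons_eq_cons.1 hΔ with ⟨he, rfl⟩ | ⟨-, Γ₁, rfl, rfl⟩
    · cases he; exact hL ⟨⟨_, h₁⟩, ⟨_, h₂⟩⟩
    · exact (ih d₁.invOrL₁ h₁.swap (by omega)).orL (ih d₁.invOrL₂ h₂.swap (by omega))
  | orR1 h => subst hΔ; exact (ih d₁ h (by omega)).orR1
  | orR2 h => subst hΔ; exact (ih d₁ h (by omega)).orR2
  | andL h =>
    rcases Multiset.cons_eq_cons.1 hΔ with ⟨he, rfl⟩ | ⟨-, Γ₁, rfl, rfl⟩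
    · cases he; exact hL ⟨_, h⟩
    · exact (ih d₁.invAndL (by simpa only [Multiset.cons_swap] using h) (by omega)).andL
  | andR h₁ h₂ => subst hΔ; exact (ih d₁ h₁ (by omega)).andR (ih d₁ h₂ (by omega))
  | impL h₁ h₂ =>
    rcases Multiset.cons_eq_cons.1 hΔ with ⟨he, rfl⟩ | ⟨-, Γ₁, rfl, rfl⟩
    · cases he; exact hL ⟨ih d₁ h₁ (by omega), ⟨_, h₂⟩⟩
    · exact (ih d₁ h₁.swap (by omega)).impL (ih d₁.invImpL h₂.swap (by omega))
  | impR h => subst hΔ; exact (ih (d₁.weakenLF _) h.swap (by omega)).impR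
  | @diaL _ _ _ w' _ _ y C _ hf h =>
    rcases Multiset.cons_eq_cons.1 hΔ with ⟨he, rfl⟩ | ⟨-, Γ₁, rfl, rfl⟩
    · cases he; exact hL fun t => ⟨_, h.rename_diaL_eigen hf t⟩
    · obtain ⟨t, ht⟩ := exists_freshIn R ((w', .dia y C) ::ₘ Γ₁) u
      exact (ih (d₁.invDiaL t) (h.rename_diaL_eigen hf t).swap (by omega)).diaL ht
  | diaR h => subst hΔ; exact (ih d₁ h (by omega)).diaR
  | boxR hf h =>
    subst hΔ
    obtain ⟨t, ht⟩ := exists_freshIn R Γ u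
    exact (ih (d₁.weakenRel _) (h.rename_boxR_eigen hf t) (by omega)).boxR ht
  | @boxL _ _ _ _ t _ _ C _ h =>
    rcases Multiset.cons_eq_cons.1 hΔ with ⟨he, rfl⟩ | ⟨-, Γ₁, rfl, rfl⟩
    · cases he; exact hL ⟨t, Multiset.mem_cons_self .., ih (d₁.weakenLF _) h (by omega)⟩
    · exact (ih (d₁.weakenLF (t, C)).swap (by simpa only [Multiset.cons_swap] using h)
        (by omega)).boxL
  | dx _ hax hf h =>
    subst hΔ
    obtain ⟨t, ht⟩ := exists_freshIn R Γ u
    obtain ⟨w', h'⟩ := h.rename_dx_eigen hf t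
    exact (ih (d₁.weakenRel _) h' (by omega)).dx w' hax ht
  | isx hax hc h => subst hΔ; exact (ih (d₁.weakenRel _) h (by omega)).isx hax hc
  | @cx _ _ _ w' u' _ x _ h =>
    subst hΔ
    have d₁' := d₁.weakenRel (u', α.conv x, w')
    rw [Multiset.cons_swap] at d₁'
    exact (ih d₁' h (by omega)).cx

theorem cutAdmissibleBelow
    (hsub : ∀ C : Formula α.Char, sizeOf C < sizeOf A → CutAdmissible α 𝒜 C) :
    ∀ N, CutAdmissibleBelow α 𝒜 A N
  | 0 => fun _ _ _ _ _ _ _ _ _ h => absurd h (Nat.not_lt_zero _)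
  | N + 1 => fun m₁ m₂ _ _ _ _ _ d₁ d₂ h => by
    have ih : CutAdmissibleBelow α 𝒜 A (m₁ + m₂) :=
      fun _ _ _ _ _ _ _ e₁ e₂ h' => cutAdmissibleBelow hsub N e₁ e₂ (by omega)
    exact cut_permute_left ih
      (fun hR => cut_permute_right ih (fun hL => cut_principal hsub hR hL) d₁ d₂) d₁ d₂

theorem cutAdmissible (A : Formula α.Char) : CutAdmissible α 𝒜 A :=
  fun _ _ _ _ _ ⟨n₁, d₁⟩ ⟨n₂, d₂⟩ =>
    cutAdmissibleBelow (fun C _ => cutAdmissible C) (n₁ + n₂ + 1) d₁ d₂ (Nat.lt_succ_self _)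
termination_by sizeOf A

end Cut

/-- **Cut-elimination**: the `(cut)` rule is admissible in `L_Σ(𝒜)`. -/
theorem cut_admissible (α : Alphabet) (𝒜 : Set (Ax α.Char))
    (R R' : Multiset (Rel α.Char)) (Γ Γ' : Multiset (LF α.Char)) (w u : ℕ)
    (A B : Formula α.Char)
    (h1 : LDeriv α 𝒜 R Γ w A) (h2 : LDeriv α 𝒜 R' ((w, A) ::ₘ Γ') u B) :
    LDeriv α 𝒜 (R + R') (Γ + Γ') u B := by
  have h1' := h1.weaken R' Γ'
  have h2' := h2.weaken R Γ
  rw [add_comm R', add_comm Γ'] at h1'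
  rw [Multiset.add_cons] at h2'
  exact cutAdmissible A h1' h2'

end IGL
end

section
/- Path replacement under grammar rules: suppose (y ⟶ s) and (ȳ ⟶ s̄) are production rules of the 𝒜-grammar g(𝒜), and let R₁ = R, wR_su, wR_yu and R₂ = R, wR_su (where wR_su abbreviates the chain of relational atoms along the string s, with fresh intermediate labels). If there exists a propagation path π(z,v) in PG(R₁) with s_π(z,v) ∈ L_{g(𝒜)}(x), then there exists a propagation path π'(z,v) in PG(R₂) with s_{π'}(z,v) ∈ L_{g(𝒜)}(x). -/
namespace IGL

/-! Each traversal of the extra edge `w R_y u`, forwards or backwards, is replaced by the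
chain `w R_s u` traversed the same way. Because `y ⟶ s` and `ȳ ⟶ s̄` are productions, each
replacement is a single derivation step, so the new string is derived from the old one and
stays in `L(x)`. -/

section Derivation

variable {C : Type} {g : Set (C × List C)}

theorem Step.of_mem {x : C} {r : List C} (h : (x, r) ∈ g) (t : List C) :
    Step g (x :: t) (r ++ t) :=
  ⟨[], t, x, r, h, rfl, rfl⟩

theorem Step.append_left {a b : List C} (h : Step g a b) (p : List C) :
    Step g (p ++ a) (p ++ b) := by
  obtain ⟨s₁, s₂, x, r, hg, rfl, rfl⟩ := h
  exact ⟨p ++ s₁, s₂, x, r, hg, by simp, by simp⟩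

theorem derives_append_left {a b : List C} (h : Relation.ReflTransGen (Step g) a b)
    (p : List C) : Relation.ReflTransGen (Step g) (p ++ a) (p ++ b) :=
  h.lift (p ++ ·) fun _ _ hs => hs.append_left p

theorem derives_cons {a b : List C} (h : Relation.ReflTransGen (Step g) a b) (c : C) :
    Relation.ReflTransGen (Step g) (c :: a) (c :: b) :=
  derives_append_left h [c]

end Derivation

section Propagation

variable {α : Alphabet} {R R' : Multiset (Rel α.Char)}

theorem PGEdge.symm {a b : ℕ} {x : α.Char} (h : PGEdge α R a x b) :
    PGEdge α R b (α.conv x) a := by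
  rcases h with h | h
  · exact Or.inr (by rwa [α.conv_conv])
  · exact Or.inl h

theorem PGEdge.mono (hR : R ≤ R') {a b : ℕ} {x : α.Char} (h : PGEdge α R a x b) :
    PGEdge α R' a x b :=
  h.imp (Multiset.mem_of_le hR) (Multiset.mem_of_le hR)

theorem PGEdge.of_cons {e : Rel α.Char} {a b : ℕ} {x : α.Char}
    (h : PGEdge α (e ::ₘ R) a x b) :
    PGEdge α R a x b ∨ e = (a, x, b) ∨ e = (b, α.conv x, a) := by
  rcases h with h | h <;> rcases Multiset.mem_cons.1 h with h | h
  · exact Or.inr (Or.inl h.symm)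
  · exact Or.inl (Or.inl h)
  · exact Or.inr (Or.inr h.symm)
  · exact Or.inl (Or.inr h)

theorem PPath.append {w v u : ℕ} {s t : List α.Char} (h₁ : PPath α R w v s)
    (h₂ : PPath α R v u t) : PPath α R w u (s ++ t) := by
  induction h₁ with
  | nil => exact h₂
  | cons e _ ih => exact .cons e (ih h₂)

theorem PPath.converse {w u : ℕ} {s : List α.Char} (h : PPath α R w u s) :
    PPath α R u w (convStr α.conv s) := by
  induction h with
  | nil => exact .nil _
  | cons e _ ih =>
    simpa [convStr] using ih.append (.cons e.symm (.nil _))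

theorem PPath.mono (hR : R ≤ R') {w u : ℕ} {s : List α.Char} (h : PPath α R w u s) :
    PPath α R' w u s := by
  induction h with
  | nil => exact .nil _
  | cons e _ ih => exact .cons (e.mono hR) ih

theorem Chain.ppath {s : List α.Char} {w u : ℕ} {m : Multiset (Rel α.Char)}
    (h : Chain s w u m) : PPath α m w u s := by
  induction h with
  | nil => exact .nil _
  | cons _ ih =>
    exact .cons (Or.inl (Multiset.mem_cons_self _ _)) (ih.mono (Multiset.le_cons_self _ _))

theorem PPath.reroute {g : Set (α.Char × List α.Char)}
    (hedge : ∀ a x b, PGEdge α R a x b →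
      PGEdge α R' a x b ∨ ∃ r, (x, r) ∈ g ∧ PPath α R' a b r)
    {z v : ℕ} {t : List α.Char} (h : PPath α R z v t) :
    ∃ t', PPath α R' z v t' ∧ Relation.ReflTransGen (Step g) t t' := by
  induction h with
  | nil => exact ⟨[], .nil _, .refl⟩
  | @cons a b _ x t e _ ih =>
    obtain ⟨t', hp, hd⟩ := ih
    rcases hedge a x b e with e' | ⟨r, hr, hpr⟩
    · exact ⟨x :: t', .cons e' hp, derives_cons hd x⟩
    · exact ⟨r ++ t', hpr.append hp, .head (Step.of_mem hr t) (derives_append_left hd r)⟩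

end Propagation

/-- **Path replacement under grammar rules**: if `(y ⟶ s)` and `(ȳ ⟶ s̄)` are
production rules of `g(𝒜)`, `R₁ = R, wR_su, wR_yu` and `R₂ = R, wR_su`, then
any propagation path `π(z,v)` in `PG(R₁)` whose string lies in `L_{g(𝒜)}(x)`
can be replaced by a propagation path `π'(z,v)` in `PG(R₂)` whose string lies
in `L_{g(𝒜)}(x)`. -/
theorem path_replacement (α : Alphabet) (𝒜 : Set (Ax α.Char))
    (y : α.Char) (s : List α.Char)
    (h1 : (y, s) ∈ Gram α 𝒜) (h2 : (α.conv y, convStr α.conv s) ∈ Gram α 𝒜)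
    (R m : Multiset (Rel α.Char)) (w u : ℕ) (hc : Chain s w u m)
    (z v : ℕ) (x : α.Char)
    (hpath : ∃ t, PPath α ((w, y, u) ::ₘ (m + R)) z v t ∧ t ∈ Lang (Gram α 𝒜) x) :
    ∃ t, PPath α (m + R) z v t ∧ t ∈ Lang (Gram α 𝒜) x := by
  obtain ⟨t, hp, ht⟩ := hpath
  have hs : PPath α (m + R) w u s := hc.ppath.mono (Multiset.le_add_right m R)
  have hedge : ∀ a c b, PGEdge α ((w, y, u) ::ₘ (m + R)) a c b →
      PGEdge α (m + R) a c b ∨ ∃ r, (c, r) ∈ Gram α 𝒜 ∧ PPath α (m + R) a b r := by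
    intro a c b e
    rcases e.of_cons with e | he | he
    · exact Or.inl e
    · simp only [Prod.mk.injEq] at he
      obtain ⟨rfl, rfl, rfl⟩ := he
      exact Or.inr ⟨s, h1, hs⟩
    · simp only [Prod.mk.injEq] at he
      obtain ⟨rfl, hy, rfl⟩ := he
      rw [hy, α.conv_conv] at h2
      exact Or.inr ⟨_, h2, hs.converse⟩
  obtain ⟨t', hp', hd⟩ := hp.reroute hedge
  exact ⟨t', hp', ht.trans hd⟩

end IGL
end

section
/- For each x ∈ Σ, the rule (c_x), inferring R, wR_xu, Γ ⊢ v : A from R, wR_xu, uR_x̄w, Γ ⊢ v : A, is hp-admissible in the refined labeled calculus L*_Σ(𝒜). -/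
namespace IGL

lemma relLabels_mono {C : Type} {R1 R2 : Multiset (Rel C)} (h : R1 ≤ R2) :
    relLabels R1 ⊆ relLabels R2 := by
  rintro l ⟨a, ha, hla⟩
  exact ⟨a, Multiset.mem_of_le h ha, hla⟩

lemma relLabels_cons_mono {C : Type} {R1 R2 : Multiset (Rel C)} (r : Rel C)
    (h : relLabels R1 ⊆ relLabels R2) :
    relLabels (r ::ₘ R1) ⊆ relLabels (r ::ₘ R2) := by
  rintro l ⟨a, ha, hla⟩
  rw [Multiset.mem_cons] at ha
  rcases ha with rfl | ha
  · exact ⟨a, Multiset.mem_cons_self _ _, hla⟩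
  · obtain ⟨b, hb, hlb⟩ := h ⟨a, ha, hla⟩
    exact ⟨b, Multiset.mem_cons_of_mem hb, hlb⟩

lemma PGEdge_of_mem_cons {α : Alphabet} {R : Multiset (Rel α.Char)} (r : Rel α.Char)
    {a : ℕ} {y : α.Char} {b : ℕ} (h : PGEdge α R a y b) : PGEdge α (r ::ₘ R) a y b := by
  rcases h with h | h
  · exact Or.inl (Multiset.mem_cons_of_mem h)
  · exact Or.inr (Multiset.mem_cons_of_mem h)

lemma PGEdge_cons_mono {α : Alphabet} {R1 R2 : Multiset (Rel α.Char)} (r : Rel α.Char)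
    (h : ∀ a y b, PGEdge α R1 a y b → PGEdge α R2 a y b) :
    ∀ a y b, PGEdge α (r ::ₘ R1) a y b → PGEdge α (r ::ₘ R2) a y b := by
  intro a y b hab
  rcases hab with hab | hab <;> rw [Multiset.mem_cons] at hab
  · rcases hab with h1 | h1
    · exact Or.inl (by rw [h1]; exact Multiset.mem_cons_self _ _)
    · exact PGEdge_of_mem_cons r (h a y b (Or.inl h1))
  · rcases hab with h1 | h1
    · exact Or.inr (by rw [h1]; exact Multiset.mem_cons_self _ _)
    · exact PGEdge_of_mem_cons r (h a y b (Or.inr h1))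

lemma PPath_mono {α : Alphabet} {R1 R2 : Multiset (Rel α.Char)}
    (h : ∀ a y b, PGEdge α R1 a y b → PGEdge α R2 a y b)
    {w u : ℕ} {s : List α.Char} (hp : PPath α R1 w u s) : PPath α R2 w u s := by
  induction hp with
  | nil w => exact PPath.nil w
  | cons he _ ih => exact PPath.cons (h _ _ _ he) ih

lemma CanProp_mono {α : Alphabet} {𝒜 : Set (Ax α.Char)} {R1 R2 : Multiset (Rel α.Char)}
    (h : ∀ a y b, PGEdge α R1 a y b → PGEdge α R2 a y b)
    {w u : ℕ} {x : α.Char} (hc : CanProp α 𝒜 R1 w u x) : CanProp α 𝒜 R2 w u x := by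
  obtain ⟨s, hp, hs⟩ := hc
  exact ⟨s, PPath_mono h hp, hs⟩

lemma freshIn_mono {C : Type} {u : ℕ} {R1 R2 : Multiset (Rel C)} {Γ : Multiset (LF C)} {v : ℕ}
    (hsub : relLabels R2 ⊆ relLabels R1) (hf : freshIn u R1 Γ v) : freshIn u R2 Γ v :=
  ⟨fun hm => hf.1 (hsub hm), hf.2.1, hf.2.2⟩

/-- Transfer of `L*_Σ(𝒜)`-derivations along a change of relational context that
keeps all propagation edges and does not introduce new labels. -/
lemma LDs_transfer {α : Alphabet} {𝒜 : Set (Ax α.Char)} {n : ℕ}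
    {R1 : Multiset (Rel α.Char)} {Γ : Multiset (LF α.Char)} {v : ℕ} {A : Formula α.Char}
    (hd : LDs α 𝒜 n R1 Γ v A) :
    ∀ R2 : Multiset (Rel α.Char), relLabels R2 ⊆ relLabels R1 →
      (∀ a y b, PGEdge α R1 a y b → PGEdge α R2 a y b) → LDs α 𝒜 n R2 Γ v A := by
  induction hd with
  | id n R Γ w p => exact fun R2 _ _ => LDs.id n R2 Γ w p
  | botL n R Γ w u A => exact fun R2 _ _ => LDs.botL n R2 Γ w u A
  | orL _ _ ih1 ih2 =>
      exact fun R2 hs he => LDs.orL (ih1 R2 hs he) (ih2 R2 hs he)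
  | orR1 _ ih => exact fun R2 hs he => LDs.orR1 (ih R2 hs he)
  | orR2 _ ih => exact fun R2 hs he => LDs.orR2 (ih R2 hs he)
  | andL _ ih => exact fun R2 hs he => LDs.andL (ih R2 hs he)
  | andR _ _ ih1 ih2 =>
      exact fun R2 hs he => LDs.andR (ih1 R2 hs he) (ih2 R2 hs he)
  | impL _ _ ih1 ih2 =>
      exact fun R2 hs he => LDs.impL (ih1 R2 hs he) (ih2 R2 hs he)
  | impR _ ih => exact fun R2 hs he => LDs.impR (ih R2 hs he)
  | diaL hf _ ih =>
      exact fun R2 hs he =>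
        LDs.diaL (freshIn_mono hs hf)
          (ih _ (relLabels_cons_mono _ hs) (PGEdge_cons_mono _ he))
  | boxR hf _ ih =>
      exact fun R2 hs he =>
        LDs.boxR (freshIn_mono hs hf)
          (ih _ (relLabels_cons_mono _ hs) (PGEdge_cons_mono _ he))
  | dx w hax hf _ ih =>
      exact fun R2 hs he =>
        LDs.dx w hax (freshIn_mono hs hf)
          (ih _ (relLabels_cons_mono _ hs) (PGEdge_cons_mono _ he))
  | pdia w hc _ ih =>
      exact fun R2 hs he => LDs.pdia w (CanProp_mono he hc) (ih R2 hs he)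
  | pbox hc _ ih =>
      exact fun R2 hs he => LDs.pbox (CanProp_mono he hc) (ih R2 hs he)

/-- **hp-admissibility of `(c_x)` in the refined calculus** `L*_Σ(𝒜)`. -/
theorem cx_hp_admissible_refined (α : Alphabet) (𝒜 : Set (Ax α.Char))
    (x : α.Char) (h : ℕ) (R : Multiset (Rel α.Char)) (Γ : Multiset (LF α.Char))
    (w u v : ℕ) (A : Formula α.Char)
    (hd : LDs α 𝒜 h ((w, x, u) ::ₘ (u, α.conv x, w) ::ₘ R) Γ v A) :
    LDs α 𝒜 h ((w, x, u) ::ₘ R) Γ v A := by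
  apply LDs_transfer hd
  · exact relLabels_mono (Multiset.cons_le_cons _ (Multiset.le_cons_self _ _))
  · intro a y b hab
    rcases hab with hab | hab <;>
      simp only [Multiset.mem_cons] at hab
    · rcases hab with h1 | h1 | h1
      · exact Or.inl (by rw [h1]; exact Multiset.mem_cons_self _ _)
      · -- (a, y, b) = (u, conv x, w): its reverse edge is (w, x, u)
        have ha : a = u := by rw [Prod.ext_iff] at h1; exact h1.1
        have hy : y = α.conv x := by rw [Prod.ext_iff] at h1; exact (Prod.ext_iff.mp h1.2).1
        have hb : b = w := by rw [Prod.ext_iff] at h1; exact (Prod.ext_iff.mp h1.2).2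
        refine Or.inr ?_
        rw [ha, hy, hb, α.conv_conv]
        exact Multiset.mem_cons_self _ _
      · exact Or.inl (Multiset.mem_cons_of_mem h1)
    · rcases hab with h1 | h1 | h1
      · exact Or.inr (by rw [h1]; exact Multiset.mem_cons_self _ _)
      · -- (b, conv y, a) = (u, conv x, w): then (a, y, b) = (w, x, u)
        have hb : b = u := by rw [Prod.ext_iff] at h1; exact h1.1
        have hy : α.conv y = α.conv x := by
          rw [Prod.ext_iff] at h1; exact (Prod.ext_iff.mp h1.2).1
        have ha : a = w := by rw [Prod.ext_iff] at h1; exact (Prod.ext_iff.mp h1.2).2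
        have hyx : y = x := by rw [← α.conv_conv y, hy, α.conv_conv]
        refine Or.inl ?_
        rw [ha, hyx, hb]
        exact Multiset.mem_cons_self _ _
      · exact Or.inr (Multiset.mem_cons_of_mem h1)

end IGL
end
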